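/- (1) Suppose D*(θ̲) = D̲(θ̲), D*(θ̄) > D̲(θ̄), and ∫_θ^{θ̄} max{D*(p + F*(p)/f*(p)), D̲(θ̄)} dp ≤ ∫_θ^{θ̄} D̲(p) dp for all θ ∈ Θ. Then quantity regulation strictly dominates price regulation: for every solution q^OPT of (ROPT), with u^OPT(θ) = ∫_θ^{θ̄} q^OPT(y) dy, and every robustly optimal price regulation M̃, W((q^OPT, u^OPT); V*, F*) > W̃(M̃; D*, F*). (2) Suppose D*(θ̄) = D̲(θ̄) and either ∫_θ^{θ̄} max{D*(p + F*(p)/f*(p)), D̲(θ̄)} dp > ∫_θ^{θ̄} D̲(p) dp for some θ ∈ Θ, or ∫_{θ̲}^{θ̄} max{D*(p + F*(p)/f*(p)), D̲(θ̄)} dp > ∫_{θ̲}^{θ̄} D̲(p) dp − ∫_{θ̲}^{P̲(D*(θ̲))} (D̲(p) − D*(θ̲)) dp. Then price regulation strictly dominates quantity regulation: for all such q^OPT and M̃, W̃(M̃; D*, F*) > W((q^OPT, u^OPT); V*, F*). -/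

import Mathlib

open MeasureTheory Set

noncomputable section

/-- The base environment: type space `Θ = [θl, θu]`, capacity `qbar`, lowest inverse
demand `Pl = P̲` (decreasing and continuous on `[0, qbar]` with `Pl 0 > θu`) and the
induced lowest demand `Dl = D̲`, with `Dl θl < qbar`. -/
structure Env where
  θl : ℝ
  θu : ℝ
  qbar : ℝ
  Pl : ℝ → ℝ
  Dl : ℝ → ℝ
  θl_pos : 0 < θl
  θlu : θl < θu
  qbar_pos : 0 < qbar
  Pl_anti : StrictAntiOn Pl (Icc 0 qbar)
  Pl_cont : ContinuousOn Pl (Icc 0 qbar)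
  Pl0 : θu < Pl 0
  Dl_inv : ∀ p, Pl qbar ≤ p → p ≤ Pl 0 → Dl p ∈ Icc (0:ℝ) qbar ∧ Pl (Dl p) = p
  Dl_high : ∀ p, Pl 0 < p → Dl p = 0
  Dl_low : ∀ p, p < Pl qbar → Dl p = qbar
  Dl_lt : Dl θl < qbar

namespace Env

/-- The type space `Θ = [θl, θu]`. -/
def Θ (E : Env) : Set ℝ := Icc E.θl E.θu

/-- The lowest gross value function `V̲ (x) = ∫_0^x P̲`. -/
def Vl (E : Env) (x : ℝ) : ℝ := ∫ s in (0:ℝ)..x, E.Pl s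

/-- `q_ℓ = D̲(θu)`: the efficient quantity at the lowest demand and highest cost. -/
def ql (E : Env) : ℝ := E.Dl E.θu

/-- `G* = V̲(q_ℓ) − θu · q_ℓ`: the maximal attainable guarantee. -/
def Gstar (E : Env) : ℝ := E.Vl E.ql - E.θu * E.ql

/-- A feasible quantity schedule: weakly decreasing on `Θ`, valued in `[0, qbar]`. -/
def IsSchedule (E : Env) (q : ℝ → ℝ) : Prop :=
  AntitoneOn q E.Θ ∧ ∀ θ ∈ E.Θ, q θ ∈ Icc (0:ℝ) E.qbar

/-- `W̲(θ, q) = V̲(q(θ)) − θ q(θ) − ∫_θ^{θu} q`: ex-post welfare at the lowest demand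
with zero rent for the highest type. -/
def Wl (E : Env) (q : ℝ → ℝ) (θ : ℝ) : ℝ :=
  E.Vl (q θ) - θ * q θ - ∫ y in θ..E.θu, q y

/-- An IC and IR (direct) quantity mechanism `(q, u)`. -/
def IsMech (E : Env) (q u : ℝ → ℝ) : Prop :=
  E.IsSchedule q ∧ 0 ≤ u E.θu ∧
    ∀ θ ∈ E.Θ, u θ = u E.θu + ∫ y in θ..E.θu, q y

/-- The set `𝒱` of admissible gross value functions: integrals of decreasing continuous
inverse demands dominating `P̲` pointwise. -/
def IsValue (E : Env) (V : ℝ → ℝ) : Prop :=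
  ∃ P : ℝ → ℝ, StrictAntiOn P (Icc 0 E.qbar) ∧ ContinuousOn P (Icc 0 E.qbar) ∧
    (∀ s ∈ Icc (0:ℝ) E.qbar, E.Pl s ≤ P s) ∧ ∀ x, V x = ∫ s in (0:ℝ)..x, P s

/-- A Borel probability measure supported in `Θ` (the measure of a cdf `F ∈ 𝒻`). -/
def IsTech (E : Env) (μ : Measure ℝ) : Prop :=
  IsProbabilityMeasure μ ∧ μ (E.Θᶜ) = 0

/-- Ex-ante welfare `W(M; V, F)` of the mechanism `(q, u)` under value `V` and
cost technology `μ`. -/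
def W (E : Env) (q u V : ℝ → ℝ) (μ : Measure ℝ) : ℝ :=
  ∫ θ, (V (q θ) - θ * q θ - u θ) ∂μ

/-- The welfare guarantee `G(M) = inf_{V ∈ 𝒱, F ∈ 𝒻} W(M; V, F)`. -/
def G (E : Env) (q u : ℝ → ℝ) : ℝ :=
  sInf {w : ℝ | ∃ (V : ℝ → ℝ) (μ : Measure ℝ),
    E.IsValue V ∧ E.IsTech μ ∧ w = E.W q u V μ}

/-- The short list: IC and IR mechanisms with the highest guarantee. -/
def ShortList (E : Env) (q u : ℝ → ℝ) : Prop :=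
  E.IsMech q u ∧ ∀ q' u' : ℝ → ℝ, E.IsMech q' u' → E.G q' u' ≤ E.G q u

/-- Feasibility in the program (ROPT): a schedule satisfying all robustness
constraints `W̲(θ, q) ≥ G*`. -/
def FeasibleROPT (E : Env) (q : ℝ → ℝ) : Prop :=
  E.IsSchedule q ∧ ∀ θ ∈ E.Θ, E.Gstar ≤ E.Wl q θ

end Env

/-- A demand `D ∈ 𝒟`, bundled with the inverse demand `P` that induces it:
`P` decreasing and continuous on `[0, qbar]`, `P ≥ P̲` pointwise, `P 0 > θu`. -/
structure Demand (E : Env) where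
  P : ℝ → ℝ
  D : ℝ → ℝ
  P_anti : StrictAntiOn P (Icc 0 E.qbar)
  P_cont : ContinuousOn P (Icc 0 E.qbar)
  P_ge : ∀ s ∈ Icc (0:ℝ) E.qbar, E.Pl s ≤ P s
  P0 : E.θu < P 0
  D_inv : ∀ p, P E.qbar ≤ p → p ≤ P 0 → D p ∈ Icc (0:ℝ) E.qbar ∧ P (D p) = p
  D_high : ∀ p, P 0 < p → D p = 0
  D_low : ∀ p, p < P E.qbar → D p = E.qbar
  D_lt : D E.θl < E.qbar

namespace Demand

/-- The gross value function `V_D(x) = ∫_0^x P` induced by a demand `D ∈ 𝒟`. -/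
def V {E : Env} (D : Demand E) (x : ℝ) : ℝ := ∫ s in (0:ℝ)..x, D.P s

end Demand

namespace Env

/-- The lowest demand `D̲` as an element of `𝒟`. -/
def DlDemand (E : Env) : Demand E where
  P := E.Pl
  D := E.Dl
  P_anti := E.Pl_anti
  P_cont := E.Pl_cont
  P_ge := fun _ _ => le_refl _
  P0 := E.Pl0
  D_inv := E.Dl_inv
  D_high := E.Dl_high
  D_low := E.Dl_low
  D_lt := E.Dl_lt

/-- A price regulation `(p, t)`: nonnegative prices and transfers. -/
def IsPriceReg (E : Env) (p : ℝ → ℝ) (t : ℝ → Demand E → ℝ) : Prop :=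
  (∀ θ ∈ E.Θ, 0 ≤ p θ) ∧ ∀ θ ∈ E.Θ, ∀ D : Demand E, 0 ≤ t θ D

/-- The rent `ũ(θ, D) = t(θ, D) − θ · D(p(θ))` of the monopolist. -/
def rent (E : Env) (p : ℝ → ℝ) (t : ℝ → Demand E → ℝ) (θ : ℝ) (D : Demand E) : ℝ :=
  t θ D - θ * D.D (p θ)

/-- Ex-post incentive compatibility of a price regulation. -/
def EPIC (E : Env) (p : ℝ → ℝ) (t : ℝ → Demand E → ℝ) : Prop :=
  ∀ θ ∈ E.Θ, ∀ θ' ∈ E.Θ, ∀ D : Demand E,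
    t θ' D - θ * D.D (p θ') ≤ E.rent p t θ D

/-- Ex-post individual rationality of a price regulation. -/
def EPIR (E : Env) (p : ℝ → ℝ) (t : ℝ → Demand E → ℝ) : Prop :=
  ∀ θ ∈ E.Θ, ∀ D : Demand E, 0 ≤ E.rent p t θ D

/-- Ex-post welfare `w̃(θ; D) = V_D(D(p(θ))) − θ·D(p(θ)) − ũ(θ, D)`. -/
def wt (E : Env) (p : ℝ → ℝ) (t : ℝ → Demand E → ℝ) (θ : ℝ) (D : Demand E) : ℝ :=
  D.V (D.D (p θ)) - θ * D.D (p θ) - E.rent p t θ D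

/-- Ex-ante welfare `W̃((p,t); D, F)` of a price regulation. -/
def Wt (E : Env) (p : ℝ → ℝ) (t : ℝ → Demand E → ℝ) (D : Demand E) (μ : Measure ℝ) : ℝ :=
  ∫ θ, E.wt p t θ D ∂μ

/-- The welfare guarantee `G̃((p,t)) = inf_{D ∈ 𝒟, F ∈ 𝒻} W̃((p,t); D, F)`. -/
def Gt (E : Env) (p : ℝ → ℝ) (t : ℝ → Demand E → ℝ) : ℝ :=
  sInf {w : ℝ | ∃ (D : Demand E) (μ : Measure ℝ), E.IsTech μ ∧ w = E.Wt p t D μ}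

/-- An EPIC and EPIR price regulation. -/
def IsAdmissiblePR (E : Env) (p : ℝ → ℝ) (t : ℝ → Demand E → ℝ) : Prop :=
  E.IsPriceReg p t ∧ E.EPIC p t ∧ E.EPIR p t

/-- The price short list: EPIC and EPIR price regulations with the highest guarantee. -/
def PriceShortList (E : Env) (p : ℝ → ℝ) (t : ℝ → Demand E → ℝ) : Prop :=
  E.IsAdmissiblePR p t ∧
    ∀ (p' : ℝ → ℝ) (t' : ℝ → Demand E → ℝ), E.IsAdmissiblePR p' t' → E.Gt p' t' ≤ E.Gt p t

end Env

/-- The conjectured model: a regular cdf `F*` with density `f*` on `Θ`, and a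
conjectured inverse demand `P*` (with induced demand `D*`) dominating `P̲`. -/
structure Model (E : Env) where
  Fstar : ℝ → ℝ
  fstar : ℝ → ℝ
  Pstar : ℝ → ℝ
  Dstar : ℝ → ℝ
  fstar_pos : ∀ θ ∈ E.Θ, 0 < fstar θ
  Fstar_ac : ∀ θ ∈ E.Θ, Fstar θ = ∫ y in E.θl..θ, fstar y
  Fstar_l : Fstar E.θl = 0
  Fstar_u : Fstar E.θu = 1
  zstar_cont : ContinuousOn (fun θ => θ + Fstar θ / fstar θ) E.Θ
  zstar_mono : StrictMonoOn (fun θ => θ + Fstar θ / fstar θ) E.Θ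
  Pstar_anti : StrictAntiOn Pstar (Icc 0 E.qbar)
  Pstar_cont : ContinuousOn Pstar (Icc 0 E.qbar)
  Pstar_ge : ∀ s ∈ Icc (0:ℝ) E.qbar, E.Pl s ≤ Pstar s
  Pstar0 : E.θu < Pstar 0
  Dstar_inv : ∀ p, Pstar E.qbar ≤ p → p ≤ Pstar 0 →
    Dstar p ∈ Icc (0:ℝ) E.qbar ∧ Pstar (Dstar p) = p
  Dstar_high : ∀ p, Pstar 0 < p → Dstar p = 0
  Dstar_low : ∀ p, p < Pstar E.qbar → Dstar p = E.qbar
  Dstar_lt : Dstar E.θl < E.qbar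

namespace Model

variable {E : Env} (Mo : Model E)

/-- The virtual cost `z*(θ) = θ + F*(θ)/f*(θ)`. -/
def zstar (θ : ℝ) : ℝ := θ + Mo.Fstar θ / Mo.fstar θ

/-- The conjectured gross value function `V*(x) = ∫_0^x P*`. -/
def Vstar (x : ℝ) : ℝ := ∫ s in (0:ℝ)..x, Mo.Pstar s

/-- The Baron–Myerson schedule `q^BM(θ) = D*(z*(θ))`. -/
def qBM (θ : ℝ) : ℝ := Mo.Dstar (Mo.zstar θ)

/-- The Baron–Myerson-with-quantity-floor schedule `q*(θ) = max{q^BM(θ), q_ℓ}`. -/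
def qstar (θ : ℝ) : ℝ := max (Mo.qBM θ) E.ql

/-- The objective of (ROPT): expected virtual surplus under the conjectured model. -/
def J (q : ℝ → ℝ) : ℝ :=
  ∫ θ in E.θl..E.θu, (Mo.Vstar (q θ) - Mo.zstar θ * q θ) * Mo.fstar θ

/-- `q` solves the program (ROPT). -/
def SolvesROPT (q : ℝ → ℝ) : Prop :=
  E.FeasibleROPT q ∧ ∀ q' : ℝ → ℝ, E.FeasibleROPT q' → Mo.J q' ≤ Mo.J q

/-- `θ*`: the unique solution of `q^BM(θ*) = q_ℓ` in `Θ` when `q^BM(θu) < q_ℓ`;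
otherwise `θ* = θu`. -/
def IsThetaStar (θs : ℝ) : Prop :=
  (Mo.qBM E.θu < E.ql ∧ θs ∈ E.Θ ∧ Mo.qBM θs = E.ql) ∨
    (E.ql ≤ Mo.qBM E.θu ∧ θs = E.θu)

/-- `θ^m`: the largest minimizer of `W̲(·, q*)` over `Θ`. -/
def IsThetaM (θm : ℝ) : Prop :=
  θm ∈ E.Θ ∧ (∀ θ' ∈ E.Θ, E.Wl Mo.qstar θm ≤ E.Wl Mo.qstar θ') ∧
    ∀ θ ∈ E.Θ, (∀ θ' ∈ E.Θ, E.Wl Mo.qstar θ ≤ E.Wl Mo.qstar θ') → θ ≤ θm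

/-- The conjectured demand `D*` as an element of `𝒟`. -/
def DstarDemand : Demand E where
  P := Mo.Pstar
  D := Mo.Dstar
  P_anti := Mo.Pstar_anti
  P_cont := Mo.Pstar_cont
  P_ge := Mo.Pstar_ge
  P0 := Mo.Pstar0
  D_inv := Mo.Dstar_inv
  D_high := Mo.Dstar_high
  D_low := Mo.Dstar_low
  D_lt := Mo.Dstar_lt

/-- Expected welfare `W((q,u); V*, F*)` of a quantity mechanism under the
conjectured model. -/
def WStar (q u : ℝ → ℝ) : ℝ :=
  ∫ θ in E.θl..E.θu, (Mo.Vstar (q θ) - θ * q θ - u θ) * Mo.fstar θ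

/-- Expected welfare `W̃((p,t); D*, F*)` of a price regulation under the
conjectured model. -/
def WtStar (p : ℝ → ℝ) (t : ℝ → Demand E → ℝ) : ℝ :=
  ∫ θ in E.θl..E.θu, E.wt p t θ Mo.DstarDemand * Mo.fstar θ

/-- A robustly optimal price regulation: in the price short list, and maximizing
expected welfare under the conjectured model over the price short list. -/
def RobustlyOptimalPR (p : ℝ → ℝ) (t : ℝ → Demand E → ℝ) : Prop :=
  E.PriceShortList p t ∧
    ∀ (p' : ℝ → ℝ) (t' : ℝ → Demand E → ℝ), E.PriceShortList p' t' →
      Mo.WtStar p' t' ≤ Mo.WtStar p t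

/-- A Baron–Myerson-with-price-cap regulation. -/
def IsBMPriceCap (p : ℝ → ℝ) (t : ℝ → Demand E → ℝ) : Prop :=
  E.IsAdmissiblePR p t ∧
  (∀ θ ∈ E.Θ, p θ = min (Mo.zstar θ) E.θu) ∧
  (∀ θ ∈ E.Θ, ∀ D : Demand E,
    E.rent p t θ D = E.rent p t E.θu D + ∫ y in θ..E.θu, D.D (p y)) ∧
  (∀ D : Demand E, D ≠ E.DlDemand → D ≠ Mo.DstarDemand →
    0 ≤ E.rent p t E.θu D ∧
      E.rent p t E.θu D ≤ D.V (D.D E.θu) - E.θu * D.D E.θu - E.Gstar) ∧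
  E.rent p t E.θu E.DlDemand = 0 ∧ E.rent p t E.θu Mo.DstarDemand = 0

end Model


namespace Aux

open intervalIntegral

variable {E : Env}

lemma qbar_mem : E.qbar ∈ Icc (0:ℝ) E.qbar := ⟨E.qbar_pos.le, le_refl _⟩

lemma zero_mem : (0:ℝ) ∈ Icc (0:ℝ) E.qbar := ⟨le_refl _, E.qbar_pos.le⟩

lemma PQ_lt_P0 (d : Demand E) : d.P E.qbar < d.P 0 :=
  d.P_anti zero_mem qbar_mem E.qbar_pos

lemma D_mem (d : Demand E) (p : ℝ) : d.D p ∈ Icc (0:ℝ) E.qbar := by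
  rcases lt_trichotomy p (d.P E.qbar) with h | h | h
  · rw [d.D_low p h]; exact qbar_mem
  · exact (d.D_inv p h.ge (h.le.trans (PQ_lt_P0 d).le)).1
  · rcases le_or_gt p (d.P 0) with h2 | h2
    · exact (d.D_inv p h.le h2).1
    · rw [d.D_high p h2]; exact zero_mem

lemma D_antitone (d : Demand E) : Antitone d.D := by
  intro p q hpq
  rcases lt_or_ge (d.P 0) q with hq | hq
  · rw [d.D_high q hq]; exact (D_mem d p).1
  · rcases lt_or_ge p (d.P E.qbar) with hp | hp
    · rw [d.D_low p hp]; exact (D_mem d q).2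
    · have hq1 : d.P E.qbar ≤ q := hp.trans hpq
      have h1 := d.D_inv p hp (hpq.trans hq)
      have h2 := d.D_inv q hq1 hq
      by_contra hcon
      push_neg at hcon
      have := d.P_anti h1.1 h2.1 hcon
      rw [h1.2, h2.2] at this
      exact absurd (hpq.trans_lt this) (lt_irrefl _)

lemma PQ_lt_θl (d : Demand E) : d.P E.qbar < E.θl := by
  by_contra hcon
  push_neg at hcon
  rcases hcon.lt_or_eq with h | h
  · have h2 := d.D_lt
    rw [d.D_low E.θl h] at h2
    exact absurd h2 (lt_irrefl _)
  · have hle : E.θl ≤ d.P 0 := (E.θlu.trans d.P0).le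
    have h1 := d.D_inv E.θl h.ge hle
    have : d.D E.θl = E.qbar := by
      have := d.P_anti.injOn h1.1 qbar_mem
      apply this
      rw [h1.2, ← h]
    exact absurd (this ▸ d.D_lt) (lt_irrefl _)

lemma θu_lt_P0 (d : Demand E) : E.θu < d.P 0 := d.P0

lemma D_inv' (d : Demand E) {v : ℝ} (hv : v ∈ Icc E.θl E.θu) : d.P (d.D v) = v :=
  (d.D_inv v ((PQ_lt_θl d).trans_le hv.1).le (hv.2.trans_lt d.P0).le).2

lemma D_of_P (d : Demand E) {s : ℝ} (hs : s ∈ Icc (0:ℝ) E.qbar) : d.D (d.P s) = s := by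
  have hmem : d.P s ∈ Icc (d.P E.qbar) (d.P 0) :=
    ⟨d.P_anti.antitoneOn hs qbar_mem hs.2, d.P_anti.antitoneOn zero_mem hs hs.1⟩
  have h1 := d.D_inv _ hmem.1 hmem.2
  exact d.P_anti.injOn h1.1 hs h1.2

lemma D_pos (d : Demand E) {v : ℝ} (hv : v ∈ Icc E.θl E.θu) : 0 < d.D v := by
  rcases (D_mem d v).1.lt_or_eq with h | h
  · exact h
  · exfalso
    have := D_inv' d hv
    rw [← h] at this
    exact absurd (this ▸ hv.2) (not_le.mpr d.P0)

lemma D_lt_qbar' (d : Demand E) {v : ℝ} (hv : v ∈ Icc E.θl E.θu) : d.D v < E.qbar := by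
  rcases (D_mem d v).2.lt_or_eq with h | h
  · exact h
  · exfalso
    have := D_inv' d hv
    rw [h] at this
    exact absurd (this ▸ hv.1) (not_le.mpr (PQ_lt_θl d))

lemma P_intInt (d : Demand E) {x y : ℝ} (hx : x ∈ Icc (0:ℝ) E.qbar)
    (hy : y ∈ Icc (0:ℝ) E.qbar) : IntervalIntegrable d.P volume x y :=
  (d.P_cont.mono (uIcc_subset_Icc hx hy)).intervalIntegrable

lemma V_diff (d : Demand E) {x y : ℝ} (hx : x ∈ Icc (0:ℝ) E.qbar)
    (hy : y ∈ Icc (0:ℝ) E.qbar) : d.V y - d.V x = ∫ s in x..y, d.P s := by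
  have h1 : IntervalIntegrable d.P volume 0 x := P_intInt d zero_mem hx
  have h2 : IntervalIntegrable d.P volume x y := P_intInt d hx hy
  show (∫ s in (0:ℝ)..y, d.P s) - _ = _
  rw [← intervalIntegral.integral_add_adjacent_intervals h1 h2]
  show _ + _ - d.V x = _
  show _ + _ - (∫ s in (0:ℝ)..x, d.P s) = _
  ring

end Aux

namespace Aux

variable {E : Env}

lemma mid_mem {s y : ℝ} (hs : s ∈ Icc (0:ℝ) E.qbar) (hy : y ∈ Icc (0:ℝ) E.qbar) :
    (s + y) / 2 ∈ Icc (0:ℝ) E.qbar := by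
  constructor
  · have := hs.1; have := hy.1; linarith
  · have := hs.2; have := hy.2; linarith

lemma int_P_le_const (d : Demand E) {u v : ℝ} (huv : u ≤ v) (hu : u ∈ Icc (0:ℝ) E.qbar)
    (hv : v ∈ Icc (0:ℝ) E.qbar) : ∫ s in u..v, d.P s ≤ (v - u) * d.P u := by
  have h1 : ∫ s in u..v, d.P s ≤ ∫ _ in u..v, d.P u := by
    apply intervalIntegral.integral_mono_on huv (P_intInt d hu hv) intervalIntegrable_const
    intro s hs
    exact d.P_anti.antitoneOn hu ⟨hu.1.trans hs.1, hs.2.trans hv.2⟩ hs.1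
  simpa [smul_eq_mul, mul_comm] using h1

lemma const_le_int_P (d : Demand E) {u v : ℝ} (huv : u ≤ v) (hu : u ∈ Icc (0:ℝ) E.qbar)
    (hv : v ∈ Icc (0:ℝ) E.qbar) : (v - u) * d.P v ≤ ∫ s in u..v, d.P s := by
  have h1 : (∫ _ in u..v, d.P v) ≤ ∫ s in u..v, d.P s := by
    apply intervalIntegral.integral_mono_on huv intervalIntegrable_const (P_intInt d hu hv)
    intro s hs
    exact d.P_anti.antitoneOn ⟨hu.1.trans hs.1, hs.2.trans hv.2⟩ hv hs.2
  simpa [smul_eq_mul, mul_comm] using h1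

lemma value_lt (d : Demand E) {v s : ℝ} (hv : v ∈ Icc E.θl E.θu) (hs : s ∈ Icc (0:ℝ) E.qbar)
    (hne : s ≠ d.D v) : d.V s - v * s < d.V (d.D v) - v * d.D v := by
  set y := d.D v with hy
  have hym : y ∈ Icc (0:ℝ) E.qbar := D_mem d v
  have hPy : d.P y = v := D_inv' d hv
  rcases hne.lt_or_gt with hlt | hlt
  · -- s < y : show v * (y - s) < V y - V s
    set m := (s + y) / 2 with hm
    have hsm : s < m := by simp only [hm]; linarith
    have hmy : m < y := by simp only [hm]; linarith
    have hmm : m ∈ Icc (0:ℝ) E.qbar := mid_mem hs hym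
    have hsplit : d.V y - d.V s = (∫ t in s..m, d.P t) + ∫ t in m..y, d.P t := by
      rw [V_diff d hs hym, intervalIntegral.integral_add_adjacent_intervals
        (P_intInt d hs hmm) (P_intInt d hmm hym)]
    have h1 : (m - s) * d.P m ≤ ∫ t in s..m, d.P t := by
      have := const_le_int_P d hsm.le hs hmm
      linarith [int_P_le_const d hsm.le hs hmm, this]
    have h2 : (y - m) * d.P y ≤ ∫ t in m..y, d.P t := const_le_int_P d hmy.le hmm hym
    have h3 : v < d.P m := by rw [← hPy]; exact d.P_anti hmm hym hmy
    have : v * (y - s) < d.V y - d.V s := by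
      rw [hsplit, hPy] at *
      nlinarith
    linarith [this]
  · -- y < s : V s - V y < v * (s - y)
    set m := (y + s) / 2 with hm
    have hym2 : y < m := by simp only [hm]; linarith
    have hms : m < s := by simp only [hm]; linarith
    have hmm : m ∈ Icc (0:ℝ) E.qbar := mid_mem hym hs
    have hsplit : d.V s - d.V y = (∫ t in y..m, d.P t) + ∫ t in m..s, d.P t := by
      rw [V_diff d hym hs, intervalIntegral.integral_add_adjacent_intervals
        (P_intInt d hym hmm) (P_intInt d hmm hs)]
    have h1 : ∫ t in y..m, d.P t ≤ (m - y) * d.P y := int_P_le_const d hym2.le hym hmm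
    have h2 : ∫ t in m..s, d.P t ≤ (s - m) * d.P m := int_P_le_const d hms.le hmm hs
    have h3 : d.P m < v := by rw [← hPy]; exact d.P_anti hym hmm hym2
    have : d.V s - d.V y < v * (s - y) := by
      rw [hsplit, hPy] at *
      nlinarith
    linarith [this]

lemma value_le (d : Demand E) {v s : ℝ} (hv : v ∈ Icc E.θl E.θu) (hs : s ∈ Icc (0:ℝ) E.qbar) :
    d.V s - v * s ≤ d.V (d.D v) - v * d.D v := by
  rcases eq_or_ne s (d.D v) with rfl | hne
  · exact le_refl _
  · exact (value_lt d hv hs hne).le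

lemma value_mono_right (d : Demand E) {v y1 y2 : ℝ} (hv : v ∈ Icc E.θl E.θu)
    (h1 : y1 ∈ Icc (0:ℝ) E.qbar) (h2 : y2 ∈ Icc (0:ℝ) E.qbar) (hy : y1 ≤ y2)
    (hD : d.D v ≤ y1) : d.V y2 - v * y2 ≤ d.V y1 - v * y1 := by
  have hdiff : d.V y2 - d.V y1 = ∫ s in y1..y2, d.P s := V_diff d h1 h2
  have hb : ∫ s in y1..y2, d.P s ≤ (y2 - y1) * d.P y1 := int_P_le_const d hy h1 h2
  have hP1 : d.P y1 ≤ v := by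
    rw [← D_inv' d hv]
    exact d.P_anti.antitoneOn (D_mem d v) h1 hD
  nlinarith [hb, hP1, hy]

lemma D_le_D (d₁ d₂ : Demand E) (hP : ∀ s ∈ Icc (0:ℝ) E.qbar, d₁.P s ≤ d₂.P s)
    {v : ℝ} (hv : v ∈ Icc E.θl E.θu) : d₁.D v ≤ d₂.D v := by
  by_contra hcon
  push_neg at hcon
  have h1 : d₁.P (d₂.D v) ≤ d₂.P (d₂.D v) := hP _ (D_mem d₂ v)
  rw [D_inv' d₂ hv] at h1
  have h2 : d₁.P (d₂.D v) > d₁.P (d₁.D v) := d₁.P_anti (D_mem d₂ v) (D_mem d₁ v) hcon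
  rw [D_inv' d₁ hv] at h2
  linarith

lemma V_le_V (d₁ d₂ : Demand E) (hP : ∀ s ∈ Icc (0:ℝ) E.qbar, d₁.P s ≤ d₂.P s)
    {s : ℝ} (hs : s ∈ Icc (0:ℝ) E.qbar) : d₁.V s ≤ d₂.V s := by
  apply intervalIntegral.integral_mono_on hs.1 (P_intInt d₁ zero_mem hs)
    (P_intInt d₂ zero_mem hs)
  intro t ht
  exact hP t ⟨ht.1, ht.2.trans hs.2⟩

/-- The master partition lemma: if `x` is antitone on `[A,B]` and `Φ` satisfies the
one-step bound `Φ v ≤ Φ u + (v-u)(x u - x v)`, then `Φ B ≤ Φ A`. -/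
lemma master {x Φ : ℝ → ℝ} {A B : ℝ} (hAB : A ≤ B)
    (hxa : ∀ ⦃u v : ℝ⦄, A ≤ u → u ≤ v → v ≤ B → x v ≤ x u)
    (h : ∀ ⦃u v : ℝ⦄, A ≤ u → u ≤ v → v ≤ B → Φ v ≤ Φ u + (v - u) * (x u - x v)) :
    Φ B ≤ Φ A := by
  rcases hAB.eq_or_lt with rfl | hlt
  · exact le_refl _
  have key : ∀ n : ℕ, Φ B ≤ Φ A + (B - A) * (x A - x B) / (n + 1) := by
    intro n
    have hN : (0:ℝ) < (n:ℝ) + 1 := by positivity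
    set δ := (B - A) / ((n:ℝ) + 1) with hδ
    have hδ0 : 0 ≤ δ := div_nonneg (by linarith) hN.le
    have hend : A + ((n:ℝ) + 1) * δ = B := by
      rw [hδ, mul_div_assoc', mul_div_cancel_left₀ _ hN.ne']; ring
    have hmemB : ∀ i : ℕ, (i:ℝ) ≤ (n:ℝ) + 1 → A + (i:ℝ) * δ ≤ B := by
      intro i hi
      rw [← hend]
      nlinarith
    have hmemA : ∀ i : ℕ, A ≤ A + (i:ℝ) * δ := by
      intro i
      have : 0 ≤ (i:ℝ) * δ := mul_nonneg (Nat.cast_nonneg i) hδ0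
      linarith
    have hstep : ∀ k : ℕ, (k:ℝ) ≤ (n:ℝ) + 1 →
        Φ (A + (k:ℝ) * δ) ≤ Φ A + δ * (x A - x (A + (k:ℝ) * δ)) := by
      intro k
      induction k with
      | zero => intro _; simp
      | succ m ih =>
        intro hk
        have hm1 : ((m:ℝ)) ≤ (n:ℝ) + 1 := by push_cast at hk ⊢; linarith
        have h1 := ih hm1
        have ht : A + (m:ℝ) * δ ≤ A + ((m:ℝ) + 1) * δ := by nlinarith
        have h2 := h (hmemA m) ht (by
          have : ((m:ℝ) + 1) = ((m+1 : ℕ) : ℝ) := by push_cast; ring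
          rw [this]
          exact hmemB (m+1) (by push_cast at hk ⊢; linarith))
        have hsimp : A + ((m:ℝ) + 1) * δ - (A + (m:ℝ) * δ) = δ := by ring
        rw [hsimp] at h2
        have : Φ (A + ((m:ℝ) + 1) * δ) ≤ Φ A + δ * (x A - x (A + ((m:ℝ) + 1) * δ)) := by
          linarith
        have hcast : ((m + 1 : ℕ) : ℝ) = (m:ℝ) + 1 := by push_cast; ring
        rw [hcast]
        exact this
    have := hstep (n+1) (by push_cast; linarith)
    have hcast : ((n + 1 : ℕ) : ℝ) = (n:ℝ) + 1 := by push_cast; ring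
    rw [hcast, hend] at this
    have hδval : δ * (x A - x B) = (B - A) * (x A - x B) / ((n:ℝ) + 1) := by
      rw [hδ]; ring
    linarith [hδval ▸ this]
  by_contra hcon
  push_neg at hcon
  set r := Φ B - Φ A with hr
  have hr0 : 0 < r := by simp only [hr]; linarith
  set C := (B - A) * (x A - x B) with hC
  have hC0 : 0 ≤ C := by
    have hxab := hxa (le_refl A) hAB (le_refl B)
    have : 0 ≤ B - A := by linarith
    have : 0 ≤ x A - x B := by linarith
    positivity
  obtain ⟨n, hn⟩ := exists_nat_gt (C / r)
  have hN : (0:ℝ) < (n:ℝ) + 1 := by positivity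
  have hlt2 : C / ((n:ℝ) + 1) < r := by
    rw [div_lt_iff₀ hN]
    have h1 : C / r < (n:ℝ) + 1 := by linarith
    rw [div_lt_iff₀ hr0] at h1
    nlinarith
  have := key n
  linarith

end Aux

namespace Aux

variable {E : Env}

lemma master_eq {x Φ : ℝ → ℝ} {A B : ℝ} (hAB : A ≤ B)
    (hxa : ∀ ⦃u v : ℝ⦄, A ≤ u → u ≤ v → v ≤ B → x v ≤ x u)
    (h1 : ∀ ⦃u v : ℝ⦄, A ≤ u → u ≤ v → v ≤ B → Φ v ≤ Φ u + (v - u) * (x u - x v))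
    (h2 : ∀ ⦃u v : ℝ⦄, A ≤ u → u ≤ v → v ≤ B → Φ u ≤ Φ v + (v - u) * (x u - x v)) :
    Φ A = Φ B := by
  refine le_antisymm ?_ (master hAB hxa h1)
  have hneg := master (x := x) (Φ := fun t => -Φ t) hAB hxa (fun u v hu huv hv => by
    have := h2 hu huv hv
    linarith)
  linarith

lemma anti_intInt {x : ℝ → ℝ} {A B : ℝ} (hx : AntitoneOn x (Icc A B)) {u v : ℝ}
    (hu : A ≤ u) (hv : v ≤ B) (huv : u ≤ v) : IntervalIntegrable x volume u v := by
  apply AntitoneOn.intervalIntegrable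
  apply hx.mono
  rw [uIcc_of_le huv]
  exact Icc_subset_Icc hu hv

lemma int_le_const_anti {x : ℝ → ℝ} {A B : ℝ} (hx : AntitoneOn x (Icc A B)) {u v : ℝ}
    (hu : A ≤ u) (huv : u ≤ v) (hv : v ≤ B) : ∫ y in u..v, x y ≤ (v - u) * x u := by
  have h1 : ∫ y in u..v, x y ≤ ∫ _ in u..v, x u := by
    apply intervalIntegral.integral_mono_on huv (anti_intInt hx hu hv huv)
      intervalIntegrable_const
    intro s hs
    exact hx ⟨hu, huv.trans hv⟩ ⟨hu.trans hs.1, hs.2.trans hv⟩ hs.1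
  simpa [smul_eq_mul, mul_comm] using h1

lemma const_le_int_anti {x : ℝ → ℝ} {A B : ℝ} (hx : AntitoneOn x (Icc A B)) {u v : ℝ}
    (hu : A ≤ u) (huv : u ≤ v) (hv : v ≤ B) : (v - u) * x v ≤ ∫ y in u..v, x y := by
  have h1 : (∫ _ in u..v, x v) ≤ ∫ y in u..v, x y := by
    apply intervalIntegral.integral_mono_on huv intervalIntegrable_const
      (anti_intInt hx hu hv huv)
    intro s hs
    exact hx ⟨hu.trans hs.1, hs.2.trans hv⟩ ⟨hu.trans huv, hv⟩ hs.2
  simpa [smul_eq_mul, mul_comm] using h1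

lemma D_inv'' (d : Demand E) {v : ℝ} (h1 : d.P E.qbar ≤ v) (h2 : v ≤ d.P 0) :
    d.P (d.D v) = v := (d.D_inv v h1 h2).2

/-- Area identity: `V(D w₁) - w₁ D(w₁) = V(D w₂) - w₂ D(w₂) + ∫_{w₁}^{w₂} D`. -/
lemma area (d : Demand E) {w1 w2 : ℝ} (h1 : d.P E.qbar ≤ w1) (hw : w1 ≤ w2)
    (h2 : w2 ≤ d.P 0) :
    d.V (d.D w1) - w1 * d.D w1 = d.V (d.D w2) - w2 * d.D w2 + ∫ v in w1..w2, d.D v := by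
  set Φ : ℝ → ℝ := fun u => d.V (d.D u) - u * d.D u + ∫ v in w1..u, d.D v with hΦ
  have hanti : ∀ ⦃u v : ℝ⦄, w1 ≤ u → u ≤ v → v ≤ w2 → d.D v ≤ d.D u :=
    fun u v _ huv _ => D_antitone d huv
  have hDanti : AntitoneOn d.D (Icc w1 w2) := (D_antitone d).antitoneOn _
  have hsplit : ∀ ⦃u v : ℝ⦄, w1 ≤ u → u ≤ v → v ≤ w2 →
      (∫ y in w1..v, d.D y) - (∫ y in w1..u, d.D y) = ∫ y in u..v, d.D y := by
    intro u v hu huv hv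
    rw [← intervalIntegral.integral_add_adjacent_intervals
      (anti_intInt hDanti (le_refl w1) (huv.trans hv) hu)
      (anti_intInt hDanti hu hv huv)]
    ring
  have hVd : ∀ ⦃u v : ℝ⦄, w1 ≤ u → u ≤ v → v ≤ w2 →
      d.V (d.D u) - d.V (d.D v) = ∫ s in (d.D v)..(d.D u), d.P s := by
    intro u v hu huv hv
    exact V_diff d (D_mem d v) (D_mem d u)
  have hbounds : ∀ ⦃u v : ℝ⦄, w1 ≤ u → u ≤ v → v ≤ w2 →
      (d.D u - d.D v) * u ≤ d.V (d.D u) - d.V (d.D v) ∧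
      d.V (d.D u) - d.V (d.D v) ≤ (d.D u - d.D v) * v := by
    intro u v hu huv hv
    have hDvu : d.D v ≤ d.D u := D_antitone d huv
    have hPu : d.P (d.D u) = u := D_inv'' d (h1.trans hu) ((huv.trans hv).trans h2)
    have hPv : d.P (d.D v) = v := D_inv'' d (h1.trans (hu.trans huv)) (hv.trans h2)
    rw [hVd hu huv hv]
    constructor
    · have := const_le_int_P d hDvu (D_mem d v) (D_mem d u)
      rw [hPu] at this
      linarith [this]
    · have := int_P_le_const d hDvu (D_mem d v) (D_mem d u)
      rw [hPv] at this
      linarith [this]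
  have key := master_eq (x := d.D) (Φ := Φ) hw hanti
    (fun u v hu huv hv => by
      have hb := (hbounds hu huv hv).1
      have hint := int_le_const_anti hDanti hu huv hv
      have hs := hsplit hu huv hv
      simp only [hΦ]
      nlinarith [hb, hint, hs])
    (fun u v hu huv hv => by
      have hb := (hbounds hu huv hv).2
      have hint := const_le_int_anti hDanti hu huv hv
      have hs := hsplit hu huv hv
      simp only [hΦ]
      nlinarith [hb, hint, hs])
  have hΦ1 : Φ w1 = d.V (d.D w1) - w1 * d.D w1 := by
    simp [hΦ]
  have hΦ2 : Φ w2 = d.V (d.D w2) - w2 * d.D w2 + ∫ v in w1..w2, d.D v := rfl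
  rw [← hΦ1, ← hΦ2, key]

end Aux

namespace Aux

variable {E : Env}

lemma θu_mem : E.θu ∈ E.Θ := ⟨E.θlu.le, le_refl _⟩

lemma θl_mem : E.θl ∈ E.Θ := ⟨le_refl _, E.θlu.le⟩

lemma DlD : (E.DlDemand).D = E.Dl := rfl

lemma DlP : (E.DlDemand).P = E.Pl := rfl

lemma DlV : (E.DlDemand).V = E.Vl := rfl

lemma ql_eq : E.ql = (E.DlDemand).D E.θu := rfl

lemma ql_mem : E.ql ∈ Icc (0:ℝ) E.qbar := D_mem E.DlDemand E.θu

lemma ql_pos : 0 < E.ql := D_pos E.DlDemand θu_mem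

lemma ql_lt_qbar : E.ql < E.qbar := D_lt_qbar' E.DlDemand θu_mem

lemma Vl_zero : E.Vl 0 = 0 := intervalIntegral.integral_same

lemma Gstar_ub {s : ℝ} (hs : s ∈ Icc (0:ℝ) E.qbar) : E.Vl s - E.θu * s ≤ E.Gstar :=
  value_le E.DlDemand θu_mem hs

lemma Gstar_ub_strict {s : ℝ} (hs : s ∈ Icc (0:ℝ) E.qbar) (hne : s ≠ E.ql) :
    E.Vl s - E.θu * s < E.Gstar :=
  value_lt E.DlDemand θu_mem hs hne

lemma Gstar_pos : 0 < E.Gstar := by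
  have := Gstar_ub_strict (E := E) zero_mem (ne_of_lt ql_pos)
  rw [Vl_zero] at this
  linarith

lemma alloc_antitone {p : ℝ → ℝ} {t : ℝ → Demand E → ℝ} (hIC : E.EPIC p t) (d : Demand E) :
    AntitoneOn (fun θ => d.D (p θ)) E.Θ := by
  intro u hu v hv huv
  have h1 := hIC u hu v hv d
  have h2 := hIC v hv u hu d
  unfold Env.rent at h1 h2
  simp only at h1 h2 ⊢
  rcases huv.lt_or_eq with hlt | heq
  · nlinarith
  · rw [heq]

lemma rent_bounds {p : ℝ → ℝ} {t : ℝ → Demand E → ℝ} (hIC : E.EPIC p t) (d : Demand E)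
    {u v : ℝ} (hu : u ∈ E.Θ) (hv : v ∈ E.Θ) :
    E.rent p t v d + (v - u) * d.D (p v) ≤ E.rent p t u d ∧
      E.rent p t u d ≤ E.rent p t v d + (v - u) * d.D (p u) := by
  have h1 := hIC u hu v hv d
  have h2 := hIC v hv u hu d
  unfold Env.rent at h1 h2 ⊢
  constructor
  · nlinarith
  · nlinarith

lemma rent_formula {p : ℝ → ℝ} {t : ℝ → Demand E → ℝ} (hIC : E.EPIC p t) (d : Demand E)
    {θ : ℝ} (hθ : θ ∈ E.Θ) :
    E.rent p t θ d = E.rent p t E.θu d + ∫ y in θ..E.θu, d.D (p y) := by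
  set x : ℝ → ℝ := fun y => d.D (p y) with hx
  set R : ℝ → ℝ := fun y => E.rent p t y d with hR
  have hxa : AntitoneOn x (Icc θ E.θu) := by
    apply (alloc_antitone hIC d).mono
    exact Icc_subset_Icc hθ.1 (le_refl _)
  have hmem : ∀ ⦃u : ℝ⦄, θ ≤ u → u ≤ E.θu → u ∈ E.Θ := fun u h1 h2 => ⟨hθ.1.trans h1, h2⟩
  set Φ : ℝ → ℝ := fun u => R u + ∫ y in θ..u, x y with hΦ
  have hsplit : ∀ ⦃u v : ℝ⦄, θ ≤ u → u ≤ v → v ≤ E.θu →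
      (∫ y in θ..v, x y) - (∫ y in θ..u, x y) = ∫ y in u..v, x y := by
    intro u v hu huv hv
    rw [← intervalIntegral.integral_add_adjacent_intervals
      (anti_intInt hxa (le_refl θ) (huv.trans hv) hu)
      (anti_intInt hxa hu hv huv)]
    ring
  have key := master_eq (x := x) (Φ := Φ) hθ.2
    (fun u v hu huv hv => hxa ⟨hu, huv.trans hv⟩ ⟨hu.trans huv, hv⟩ huv)
    (fun u v hu huv hv => by
      have hb := (rent_bounds hIC d (hmem hu (huv.trans hv)) (hmem (hu.trans huv) hv)).1
      have hint := int_le_const_anti hxa hu huv hv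
      have hs := hsplit hu huv hv
      simp only [hΦ]
      have : R v - R u ≤ -((v - u) * x v) := by
        simp only [hR, hx] at hb ⊢
        linarith
      nlinarith [hint, hs, this])
    (fun u v hu huv hv => by
      have hb := (rent_bounds hIC d (hmem hu (huv.trans hv)) (hmem (hu.trans huv) hv)).2
      have hint := const_le_int_anti hxa hu huv hv
      have hs := hsplit hu huv hv
      simp only [hΦ]
      have : R u - R v ≤ (v - u) * x u := by
        simp only [hR, hx] at hb ⊢
        linarith
      nlinarith [hint, hs, this])
  have h1 : Φ θ = R θ := by simp [hΦ]
  have h2 : Φ E.θu = R E.θu + ∫ y in θ..E.θu, x y := rfl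
  have := h1 ▸ h2 ▸ key
  exact this

lemma price_at_top {p : ℝ → ℝ} {t : ℝ → Demand E → ℝ} (hIR : E.EPIR p t)
    (HSL : ∀ θ ∈ E.Θ, ∀ d : Demand E, E.Gstar ≤ E.wt p t θ d) : p E.θu = E.θu := by
  have h := HSL E.θu θu_mem E.DlDemand
  have hrent : 0 ≤ E.rent p t E.θu E.DlDemand := hIR E.θu θu_mem E.DlDemand
  unfold Env.wt at h
  rw [DlV, DlD] at h
  set s := E.Dl (p E.θu) with hs
  have h2 : E.Gstar ≤ E.Vl s - E.θu * s := by linarith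
  have hsm : s ∈ Icc (0:ℝ) E.qbar := D_mem E.DlDemand _
  have hseq : s = E.ql := by
    by_contra hne
    have := Gstar_ub_strict hsm (by rw [ql_eq] at hne ⊢; exact hne)
    linarith
  rcases lt_or_ge (p E.θu) (E.Pl E.qbar) with hc | hc
  · exfalso
    have : s = E.qbar := E.Dl_low _ hc
    rw [hseq] at this
    exact absurd this (ne_of_lt ql_lt_qbar)
  rcases le_or_gt (p E.θu) (E.Pl 0) with hc2 | hc2
  · have hinv : E.Pl s = p E.θu := (E.Dl_inv _ hc hc2).2
    have hinv2 : E.Pl E.ql = E.θu := D_inv' E.DlDemand θu_mem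
    rw [hseq, hinv2] at hinv
    exact hinv.symm
  · exfalso
    have : s = 0 := E.Dl_high _ hc2
    rw [hseq] at this
    exact absurd this (ne_of_gt ql_pos)

end Aux

namespace Aux

variable {E : Env}

/-- Clamp into `Θ`. -/
def clamp (E : Env) (θ : ℝ) : ℝ := max E.θl (min θ E.θu)

lemma clamp_mem (θ : ℝ) : clamp E θ ∈ E.Θ := by
  unfold clamp
  constructor
  · exact le_max_left _ _
  · exact max_le (E.θlu.le) (min_le_right _ _)

lemma clamp_id {θ : ℝ} (hθ : θ ∈ E.Θ) : clamp E θ = θ := by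
  unfold clamp
  rw [min_eq_left hθ.2, max_eq_right hθ.1]

lemma clamp_mono : Monotone (clamp E) := by
  intro u v huv
  exact max_le_max (le_refl _) (min_le_min huv (le_refl _))

lemma clamp_cont : Continuous (clamp E) :=
  continuous_const.max (continuous_id.min continuous_const)

lemma fstar_int (Mo : Model E) : IntervalIntegrable Mo.fstar volume E.θl E.θu := by
  by_contra hcon
  have h0 := intervalIntegral.integral_undef hcon
  have h1 := Mo.Fstar_ac E.θu θu_mem
  rw [Mo.Fstar_u] at h1
  rw [h0] at h1
  exact one_ne_zero h1

lemma Fstar_nonneg (Mo : Model E) {θ : ℝ} (hθ : θ ∈ E.Θ) : 0 ≤ Mo.Fstar θ := by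
  rw [Mo.Fstar_ac θ hθ]
  apply intervalIntegral.integral_nonneg hθ.1
  intro u hu
  exact (Mo.fstar_pos u ⟨hu.1, hu.2.trans hθ.2⟩).le

lemma zstar_ge (Mo : Model E) {θ : ℝ} (hθ : θ ∈ E.Θ) : θ ≤ Mo.zstar θ := by
  unfold Model.zstar
  have h1 : 0 ≤ Mo.Fstar θ / Mo.fstar θ :=
    div_nonneg (Fstar_nonneg Mo hθ) (Mo.fstar_pos θ hθ).le
  linarith

lemma zstar_θl (Mo : Model E) : Mo.zstar E.θl = E.θl := by
  unfold Model.zstar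
  rw [Mo.Fstar_l]
  simp

lemma zstar_mono' (Mo : Model E) : MonotoneOn Mo.zstar E.Θ :=
  Mo.zstar_mono.monotoneOn

/-- The BM-with-price-cap price. -/
def phat (Mo : Model E) (θ : ℝ) : ℝ := min (Mo.zstar (clamp E θ)) E.θu

/-- The BM-with-price-cap transfer. -/
def that (Mo : Model E) (θ : ℝ) (d : Demand E) : ℝ :=
  θ * d.D (phat Mo θ) + ∫ y in (clamp E θ)..E.θu, d.D (phat Mo y)

lemma phat_mem (Mo : Model E) (θ : ℝ) : phat Mo θ ∈ E.Θ := by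
  unfold phat
  constructor
  · exact le_min ((clamp_mem θ).1.trans (zstar_ge Mo (clamp_mem θ))) E.θlu.le
  · exact min_le_right _ _

lemma phat_mono (Mo : Model E) : Monotone (phat Mo) := by
  intro u v huv
  exact min_le_min (zstar_mono' Mo (clamp_mem u) (clamp_mem v) (clamp_mono huv)) (le_refl _)

lemma phat_ge (Mo : Model E) {θ : ℝ} (hθ : θ ∈ E.Θ) : θ ≤ phat Mo θ := by
  unfold phat
  rw [clamp_id hθ]
  exact le_min (zstar_ge Mo hθ) hθ.2

lemma phat_θu (Mo : Model E) : phat Mo E.θu = E.θu := by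
  unfold phat
  rw [clamp_id θu_mem]
  exact min_eq_right (zstar_ge Mo θu_mem)

lemma xhat_anti (Mo : Model E) (d : Demand E) : Antitone (fun θ => d.D (phat Mo θ)) :=
  fun _ _ huv => D_antitone d (phat_mono Mo huv)

lemma xhat_intInt (Mo : Model E) (d : Demand E) (u v : ℝ) :
    IntervalIntegrable (fun θ => d.D (phat Mo θ)) volume u v :=
  ((xhat_anti Mo d).antitoneOn _).intervalIntegrable

lemma bm_rent (Mo : Model E) (θ : ℝ) (d : Demand E) :
    E.rent (phat Mo) (that Mo) θ d = ∫ y in (clamp E θ)..E.θu, d.D (phat Mo y) := by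
  unfold Env.rent that
  ring

lemma bm_reg (Mo : Model E) : E.IsPriceReg (phat Mo) (that Mo) := by
  constructor
  · intro θ _
    exact (E.θl_pos.trans_le (phat_mem Mo θ).1).le
  · intro θ hθ d
    unfold that
    have h1 : 0 ≤ θ * d.D (phat Mo θ) :=
      mul_nonneg (E.θl_pos.trans_le hθ.1).le (D_mem d _).1
    have h2 : 0 ≤ ∫ y in (clamp E θ)..E.θu, d.D (phat Mo y) := by
      apply intervalIntegral.integral_nonneg (clamp_mem θ).2
      intro u _
      exact (D_mem d _).1
    linarith

lemma bm_EPIR (Mo : Model E) : E.EPIR (phat Mo) (that Mo) := by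
  intro θ hθ d
  rw [bm_rent Mo θ d]
  apply intervalIntegral.integral_nonneg (clamp_mem θ).2
  intro u _
  exact (D_mem d _).1

lemma bm_EPIC (Mo : Model E) : E.EPIC (phat Mo) (that Mo) := by
  intro θ hθ θ' hθ' d
  set x : ℝ → ℝ := fun y => d.D (phat Mo y) with hx
  have hxa : AntitoneOn x (Icc E.θl E.θu) := ((xhat_anti Mo d).antitoneOn _)
  rw [bm_rent Mo θ d]
  unfold that
  rw [clamp_id hθ, clamp_id hθ']
  have hsplit : (∫ y in θ..E.θu, x y) - (∫ y in θ'..E.θu, x y) = ∫ y in θ..θ', x y := by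
    rw [← intervalIntegral.integral_add_adjacent_intervals (a := θ) (b := θ') (c := E.θu)
      (xhat_intInt Mo d θ θ') (xhat_intInt Mo d θ' E.θu)]
    ring
  rcases le_or_gt θ θ' with hc | hc
  · have := const_le_int_anti hxa hθ.1 hc hθ'.2
    simp only [← hx] at this ⊢
    nlinarith [this, hsplit]
  · have := int_le_const_anti hxa hθ'.1 hc.le hθ.2
    have hsym : (∫ y in θ..θ', x y) = -∫ y in θ'..θ, x y := intervalIntegral.integral_symm _ _
    simp only [← hx] at this ⊢
    nlinarith [this, hsplit, hsym]

lemma bm_admissible (Mo : Model E) : E.IsAdmissiblePR (phat Mo) (that Mo) :=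
  ⟨bm_reg Mo, bm_EPIC Mo, bm_EPIR Mo⟩

lemma bm_guarantee_pointwise (Mo : Model E) {θ : ℝ} (hθ : θ ∈ E.Θ) (d : Demand E) :
    E.Gstar ≤ E.wt (phat Mo) (that Mo) θ d := by
  set x : ℝ → ℝ := fun y => d.D (phat Mo y) with hx
  have hxa : AntitoneOn x (Icc E.θl E.θu) := ((xhat_anti Mo d).antitoneOn _)
  set Φ : ℝ → ℝ := fun u => d.V (x u) - u * x u - ∫ y in u..E.θu, x y with hΦ
  have hmem : ∀ ⦃u : ℝ⦄, θ ≤ u → u ≤ E.θu → u ∈ E.Θ := fun u h1 h2 => ⟨hθ.1.trans h1, h2⟩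
  have hkey : Φ E.θu ≤ Φ θ := by
    apply master (x := x) hθ.2
    · intro u v hu huv hv
      exact hxa ⟨hθ.1.trans hu, huv.trans hv⟩ ⟨hθ.1.trans (hu.trans huv), hv⟩ huv
    · intro u v hu huv hv
      have humem := hmem hu (huv.trans hv)
      have hvmem := hmem (hu.trans huv) hv
      have hVd : d.V (x u) - d.V (x v) = ∫ s in (x v)..(x u), d.P s :=
        V_diff d (D_mem d _) (D_mem d _)
      have hxuv : x v ≤ x u := hxa humem hvmem huv
      have hlow : (x u - x v) * d.P (x u) ≤ ∫ s in (x v)..(x u), d.P s :=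
        const_le_int_P d hxuv (D_mem d _) (D_mem d _)
      have hPinv : d.P (x u) = phat Mo u := D_inv' d (phat_mem Mo u)
      have hpu : u ≤ phat Mo u := phat_ge Mo humem
      have hint : ∫ y in u..v, x y ≤ (v - u) * x u := int_le_const_anti hxa humem.1 huv hvmem.2
      have hsplit : (∫ y in u..E.θu, x y) - (∫ y in v..E.θu, x y) = ∫ y in u..v, x y := by
        rw [← intervalIntegral.integral_add_adjacent_intervals (a := u) (b := v) (c := E.θu)
          (xhat_intInt Mo d u v) (xhat_intInt Mo d v E.θu)]
        ring
      rw [hPinv] at hlow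
      simp only [hΦ]
      have hVb : d.V (x v) - d.V (x u) ≤ -((x u - x v) * phat Mo u) := by linarith [hVd ▸ hlow]
      nlinarith [hVb, hint, hsplit, hxuv, hpu]
  have hΦθu : E.Gstar ≤ Φ E.θu := by
    simp only [hΦ, intervalIntegral.integral_same]
    have h1 : x E.θu = d.D E.θu := by rw [hx]; simp only [phat_θu]
    rw [h1]
    have h2 : d.V E.ql - E.θu * E.ql ≤ d.V (d.D E.θu) - E.θu * d.D E.θu :=
      value_le d θu_mem ql_mem
    have h3 : E.Vl E.ql ≤ d.V E.ql := by
      have := V_le_V E.DlDemand d d.P_ge ql_mem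
      rw [DlV] at this
      exact this
    unfold Env.Gstar
    linarith
  have hwt : E.wt (phat Mo) (that Mo) θ d = Φ θ := by
    unfold Env.wt
    rw [bm_rent Mo θ d, clamp_id hθ]
  rw [hwt]
  linarith

end Aux

namespace Aux

variable {E : Env}

lemma Θ_measurable : MeasurableSet E.Θ := measurableSet_Icc

lemma tech_dirac {θ : ℝ} (hθ : θ ∈ E.Θ) : E.IsTech (Measure.dirac θ) := by
  refine ⟨by infer_instance, ?_⟩
  rw [Measure.dirac_apply' _ (Θ_measurable.compl)]
  simp only [Set.indicator_apply_eq_zero]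
  intro h
  exact absurd hθ h

lemma Wt_dirac (p : ℝ → ℝ) (t : ℝ → Demand E → ℝ) (d : Demand E) (θ : ℝ) :
    E.Wt p t d (Measure.dirac θ) = E.wt p t θ d := integral_dirac _ _

lemma Gt_le_Gstar {p : ℝ → ℝ} {t : ℝ → Demand E → ℝ} (hadm : E.IsAdmissiblePR p t) :
    E.Gt p t ≤ E.Gstar := by
  obtain ⟨hreg, hIC, hIR⟩ := hadm
  have hmem : E.wt p t E.θu E.DlDemand ∈
      {w : ℝ | ∃ (D : Demand E) (μ : Measure ℝ), E.IsTech μ ∧ w = E.Wt p t D μ} :=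
    ⟨E.DlDemand, Measure.dirac E.θu, tech_dirac θu_mem, (Wt_dirac p t E.DlDemand E.θu).symm⟩
  have hle : E.wt p t E.θu E.DlDemand ≤ E.Gstar := by
    unfold Env.wt
    rw [DlV, DlD]
    have h1 := Gstar_ub (E := E) (D_mem E.DlDemand (p E.θu))
    rw [DlD] at h1
    have h2 := hIR E.θu θu_mem E.DlDemand
    linarith
  unfold Env.Gt
  by_cases hbdd : BddBelow {w : ℝ | ∃ (D : Demand E) (μ : Measure ℝ),
      E.IsTech μ ∧ w = E.Wt p t D μ}
  · exact (csInf_le hbdd hmem).trans hle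
  · rw [Real.sInf_of_not_bddBelow hbdd]
    exact Gstar_pos.le

/-- A continuous global extension of the value function `d.V`. -/
def Vc (d : Demand E) : ℝ → ℝ := fun s => ∫ u in (0:ℝ)..s, d.P (max 0 (min u E.qbar))

lemma Vc_cont (d : Demand E) : Continuous (Vc d) := by
  apply intervalIntegral.continuous_primitive
  intro u v
  apply Continuous.intervalIntegrable
  apply d.P_cont.comp_continuous (continuous_const.max (continuous_id.min continuous_const))
  intro s
  constructor
  · exact le_max_left _ _
  · exact max_le E.qbar_pos.le (min_le_right _ _)

lemma Vc_eq (d : Demand E) {s : ℝ} (hs : s ∈ Icc (0:ℝ) E.qbar) : Vc d s = d.V s := by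
  unfold Vc Demand.V
  apply intervalIntegral.integral_congr
  intro u hu
  rw [uIcc_of_le hs.1] at hu
  have h1 : min u E.qbar = u := min_eq_left (hu.2.trans hs.2)
  have h2 : max 0 u = u := max_eq_right hu.1
  show d.P (max 0 (min u E.qbar)) = d.P u
  rw [h1, h2]

lemma Vc_bound (d : Demand E) : ∃ C : ℝ, ∀ s ∈ Icc (0:ℝ) E.qbar, |d.V s| ≤ C := by
  obtain ⟨M, hM⟩ := (isCompact_Icc (a := (0:ℝ)) (b := E.qbar)).exists_bound_of_continuousOn d.P_cont
  refine ⟨M * E.qbar, fun s hs => ?_⟩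
  rw [← Vc_eq d hs]
  unfold Vc
  have hb := intervalIntegral.norm_integral_le_of_norm_le_const (C := M)
    (f := fun u => d.P (max 0 (min u E.qbar))) (a := 0) (b := s) ?_
  · rw [Real.norm_eq_abs] at hb
    have : |s - 0| ≤ E.qbar := by
      rw [abs_of_nonneg (by linarith [hs.1])]
      linarith [hs.2]
    have hM0 : 0 ≤ M := le_trans (norm_nonneg _) (hM 0 zero_mem)
    calc |∫ u in (0:ℝ)..s, d.P (max 0 (min u E.qbar))| ≤ M * |s - 0| := hb
      _ ≤ M * E.qbar := by nlinarith
  · intro u _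
    apply hM
    constructor
    · exact le_max_left _ _
    · exact max_le E.qbar_pos.le (min_le_right _ _)

lemma bm_wt_meas (Mo : Model E) (d : Demand E) :
    Measurable (fun θ => E.wt (phat Mo) (that Mo) θ d) := by
  have hx : Measurable (fun θ => d.D (phat Mo θ)) := (xhat_anti Mo d).measurable
  have hxmem : ∀ θ, d.D (phat Mo θ) ∈ Icc (0:ℝ) E.qbar := fun θ => D_mem d _
  have h1 : Measurable (fun θ => d.V (d.D (phat Mo θ))) := by
    have : (fun θ => d.V (d.D (phat Mo θ))) = fun θ => Vc d (d.D (phat Mo θ)) := by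
      funext θ
      rw [Vc_eq d (hxmem θ)]
    rw [this]
    exact (Vc_cont d).measurable.comp hx
  have h2 : Measurable (fun θ => θ * d.D (phat Mo θ)) := measurable_id.mul hx
  have h3 : Measurable (fun θ => E.rent (phat Mo) (that Mo) θ d) := by
    have heq : (fun θ => E.rent (phat Mo) (that Mo) θ d) =
        (fun w => ∫ y in w..E.θu, d.D (phat Mo y)) ∘ (clamp E) := by
      funext θ
      exact bm_rent Mo θ d
    rw [heq]
    have hcont : Continuous (fun w => ∫ y in w..E.θu, d.D (phat Mo y)) := by
      have : (fun w => ∫ y in w..E.θu, d.D (phat Mo y)) =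
          fun w => -(∫ y in E.θu..w, d.D (phat Mo y)) := by
        funext w
        rw [← intervalIntegral.integral_symm]
      rw [this]
      exact (intervalIntegral.continuous_primitive (fun u v => xhat_intInt Mo d u v) E.θu).neg
    exact (hcont.comp clamp_cont).measurable
  exact (h1.sub h2).sub h3

lemma bm_wt_bound (Mo : Model E) (d : Demand E) :
    ∃ C : ℝ, ∀ θ ∈ E.Θ, |E.wt (phat Mo) (that Mo) θ d| ≤ C := by
  obtain ⟨C1, hC1⟩ := Vc_bound d
  set B := max |E.θl| |E.θu| with hB
  refine ⟨C1 + B * E.qbar + E.qbar * (E.θu - E.θl), fun θ hθ => ?_⟩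
  have hxmem := D_mem d (phat Mo θ)
  have h1 : |d.V (d.D (phat Mo θ))| ≤ C1 := hC1 _ hxmem
  have h2 : |θ * d.D (phat Mo θ)| ≤ B * E.qbar := by
    rw [abs_mul]
    have hθa : |θ| ≤ B := by
      rw [hB, abs_le]
      constructor
      · have := neg_abs_le E.θl
        have := le_max_left |E.θl| |E.θu|
        linarith [hθ.1]
      · have := le_abs_self E.θu
        have := le_max_right |E.θl| |E.θu|
        linarith [hθ.2]
    have hxa : |d.D (phat Mo θ)| ≤ E.qbar := by
      rw [abs_of_nonneg hxmem.1]
      exact hxmem.2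
    have hB0 : 0 ≤ B := le_trans (abs_nonneg _) (le_max_left _ _)
    exact mul_le_mul hθa hxa (abs_nonneg _) hB0
  have h3 : |E.rent (phat Mo) (that Mo) θ d| ≤ E.qbar * (E.θu - E.θl) := by
    rw [bm_rent Mo θ d, clamp_id hθ]
    have hb := intervalIntegral.norm_integral_le_of_norm_le_const (C := E.qbar)
      (f := fun y => d.D (phat Mo y)) (a := θ) (b := E.θu) ?_
    · rw [Real.norm_eq_abs] at hb
      have : |E.θu - θ| ≤ E.θu - E.θl := by
        rw [abs_of_nonneg (by linarith [hθ.2])]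
        linarith [hθ.1]
      calc |∫ y in θ..E.θu, d.D (phat Mo y)| ≤ E.qbar * |E.θu - θ| := hb
        _ ≤ E.qbar * (E.θu - E.θl) := by nlinarith [E.qbar_pos]
    · intro y _
      rw [Real.norm_eq_abs, abs_of_nonneg (D_mem d _).1]
      exact (D_mem d _).2
  unfold Env.wt
  calc |d.V (d.D (phat Mo θ)) - θ * d.D (phat Mo θ) - E.rent (phat Mo) (that Mo) θ d|
      ≤ |d.V (d.D (phat Mo θ))| + |θ * d.D (phat Mo θ)| + |E.rent (phat Mo) (that Mo) θ d| := by
        apply (abs_sub _ _).trans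
        gcongr
        exact abs_sub _ _
    _ ≤ C1 + B * E.qbar + E.qbar * (E.θu - E.θl) := by linarith

lemma bm_Gt_ge (Mo : Model E) : E.Gstar ≤ E.Gt (phat Mo) (that Mo) := by
  classical
  apply le_csInf
  · exact ⟨E.Wt (phat Mo) (that Mo) E.DlDemand (Measure.dirac E.θl),
      E.DlDemand, Measure.dirac E.θl, tech_dirac θl_mem, rfl⟩
  rintro w ⟨d, μ, ⟨hprob, hnull⟩, rfl⟩
  set g2 : ℝ → ℝ := E.Θ.piecewise (fun θ => E.wt (phat Mo) (that Mo) θ d)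
    (fun _ => E.Gstar) with hg2
  have hmeas : Measurable g2 := Measurable.piecewise Θ_measurable (bm_wt_meas Mo d)
    measurable_const
  obtain ⟨C, hC⟩ := bm_wt_bound Mo d
  have hbound : ∀ θ, ‖g2 θ‖ ≤ max C |E.Gstar| := by
    intro θ
    rw [Real.norm_eq_abs, hg2]
    by_cases hθ : θ ∈ E.Θ
    · rw [Set.piecewise_eq_of_mem _ _ _ hθ]
      exact le_max_of_le_left (hC θ hθ)
    · rw [Set.piecewise_eq_of_notMem _ _ _ hθ]
      exact le_max_of_le_right (le_refl _)
  have hae : (fun θ => E.wt (phat Mo) (that Mo) θ d) =ᵐ[μ] g2 := by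
    have hsub : {θ | E.wt (phat Mo) (that Mo) θ d ≠ g2 θ} ⊆ E.Θᶜ := by
      intro θ hne
      by_contra hmem
      rw [notMem_compl_iff] at hmem
      apply hne
      rw [hg2, Set.piecewise_eq_of_mem _ _ _ hmem]
    exact measure_mono_null hsub hnull
  have : IsProbabilityMeasure μ := hprob
  have hint : Integrable g2 μ :=
    Integrable.mono' (integrable_const _) hmeas.aestronglyMeasurable
      (Filter.Eventually.of_forall hbound)
  have hge : ∀ θ, E.Gstar ≤ g2 θ := by
    intro θ
    rw [hg2]
    by_cases hθ : θ ∈ E.Θ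
    · rw [Set.piecewise_eq_of_mem _ _ _ hθ]
      exact bm_guarantee_pointwise Mo hθ d
    · rw [Set.piecewise_eq_of_notMem _ _ _ hθ]
  unfold Env.Wt
  rw [integral_congr_ae hae]
  calc E.Gstar = ∫ _, E.Gstar ∂μ := by simp
    _ ≤ ∫ θ, g2 θ ∂μ := integral_mono (integrable_const _) hint hge

lemma bm_shortlist (Mo : Model E) : E.PriceShortList (phat Mo) (that Mo) :=
  ⟨bm_admissible Mo, fun p' t' hadm' => (Gt_le_Gstar hadm').trans (bm_Gt_ge Mo)⟩

lemma shortlist_pointwise {p : ℝ → ℝ} {t : ℝ → Demand E → ℝ} (Mo : Model E)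
    (hsl : E.PriceShortList p t) :
    ∀ θ ∈ E.Θ, ∀ d : Demand E, E.Gstar ≤ E.wt p t θ d := by
  have hGt : E.Gstar ≤ E.Gt p t :=
    (bm_Gt_ge Mo).trans (hsl.2 (phat Mo) (that Mo) (bm_admissible Mo))
  intro θ hθ d
  have hmem : E.wt p t θ d ∈ {w : ℝ | ∃ (D : Demand E) (μ : Measure ℝ),
      E.IsTech μ ∧ w = E.Wt p t D μ} :=
    ⟨d, Measure.dirac θ, tech_dirac hθ, (Wt_dirac p t d θ).symm⟩
  have hbdd : BddBelow {w : ℝ | ∃ (D : Demand E) (μ : Measure ℝ),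
      E.IsTech μ ∧ w = E.Wt p t D μ} := by
    by_contra hcon
    unfold Env.Gt at hGt
    rw [Real.sInf_of_not_bddBelow hcon] at hGt
    exact absurd hGt (not_le.mpr Gstar_pos)
  exact hGt.trans (csInf_le hbdd hmem)

end Aux

namespace Aux

open MeasureTheory

variable {E : Env}

lemma ab_le : E.θl ≤ E.θu := E.θlu.le

lemma anti_bdd_integrable {x : ℝ → ℝ} (hx : Antitone x)
    (hxm : ∀ θ, x θ ∈ Icc (0:ℝ) E.qbar) (μ : Measure ℝ) [IsFiniteMeasure μ] :
    Integrable x μ := by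
  apply Integrable.mono' (integrable_const E.qbar) hx.measurable.aestronglyMeasurable
  apply Filter.Eventually.of_forall
  intro θ
  rw [Real.norm_eq_abs, abs_of_nonneg (hxm θ).1]
  exact (hxm θ).2

/-- Fubini / integration by parts: `∫ (∫_θ^θu x) f dθ = ∫ x(y) F(y) dy`. -/
lemma fubini_swap (Mo : Model E) {x : ℝ → ℝ} (hx : Antitone x)
    (hxm : ∀ θ, x θ ∈ Icc (0:ℝ) E.qbar) :
    (∫ θ in E.θl..E.θu, (∫ y in θ..E.θu, x y) * Mo.fstar θ)
      = ∫ y in E.θl..E.θu, x y * Mo.Fstar y := by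
  set a := E.θl with ha
  set b := E.θu with hb
  have hab : a ≤ b := ab_le
  set μ0 : Measure ℝ := volume.restrict (Ioc a b) with hμ0
  have hfin : IsFiniteMeasure μ0 := by
    constructor
    rw [hμ0, Measure.restrict_apply_univ, Real.volume_Ioc]
    exact ENNReal.ofReal_lt_top
  have hfint : Integrable Mo.fstar μ0 := (fstar_int Mo).1
  set F : ℝ × ℝ → ℝ := fun q => Mo.fstar q.1 * (x q.2 * if q.1 < q.2 then (1:ℝ) else 0)
    with hF
  have hsetm : MeasurableSet {q : ℝ × ℝ | q.1 < q.2} :=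
    measurableSet_lt measurable_fst measurable_snd
  have hGm : Measurable (fun q : ℝ × ℝ => x q.2 * if q.1 < q.2 then (1:ℝ) else 0) :=
    (hx.measurable.comp measurable_snd).mul (Measurable.ite hsetm measurable_const
      measurable_const)
  have hGb : ∀ q : ℝ × ℝ, ‖x q.2 * if q.1 < q.2 then (1:ℝ) else 0‖ ≤ E.qbar := by
    intro q
    rw [Real.norm_eq_abs, abs_mul]
    rcases lt_or_ge q.1 q.2 with h | h
    · rw [if_pos h]
      simp only [abs_one, mul_one]
      rw [abs_of_nonneg (hxm q.2).1]
      exact (hxm q.2).2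
    · rw [if_neg (not_lt.mpr h)]
      simp only [abs_zero, mul_zero]
      exact E.qbar_pos.le
  have hFm : AEStronglyMeasurable F (μ0.prod μ0) := by
    apply AEStronglyMeasurable.mul
    · exact hfint.aestronglyMeasurable.comp_fst
    · exact hGm.aestronglyMeasurable
  have hFint : Integrable F (μ0.prod μ0) := by
    rw [integrable_prod_iff hFm]
    constructor
    · apply Filter.Eventually.of_forall
      intro θ
      have hre : (fun y => F (θ, y)) = fun y => Mo.fstar θ * (x y * if θ < y then (1:ℝ) else 0) :=
        rfl
      rw [hre]
      apply Integrable.const_mul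
      apply Integrable.mono' (integrable_const E.qbar)
      · exact ((hx.measurable).mul (Measurable.ite
          (measurableSet_Ioi) measurable_const
          measurable_const)).aestronglyMeasurable
      · exact Filter.Eventually.of_forall (fun y => hGb (θ, y))
    · have hmeas2 : AEStronglyMeasurable (fun θ => ∫ y, ‖F (θ, y)‖ ∂μ0) μ0 :=
        hFm.norm.integral_prod_right'
      apply Integrable.mono' ((hfint.abs).mul_const (E.qbar * (b - a))) hmeas2
      apply Filter.Eventually.of_forall
      intro θ
      have hle : ∀ y, ‖F (θ, y)‖ ≤ |Mo.fstar θ| * E.qbar := by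
        intro y
        have h1 := hGb (θ, y)
        have h0 : (0:ℝ) ≤ |Mo.fstar θ| := abs_nonneg _
        have hre : F (θ, y) = Mo.fstar θ * (x y * if θ < y then (1:ℝ) else 0) := rfl
        rw [hre, Real.norm_eq_abs, abs_mul]
        rw [Real.norm_eq_abs] at h1
        nlinarith [h1, abs_nonneg (x y * if θ < y then (1:ℝ) else 0)]
      have hmeas3 : AEStronglyMeasurable (fun y => ‖F (θ, y)‖) μ0 := by
        have hrfl : (fun y => ‖F (θ, y)‖) =
            fun y => ‖Mo.fstar θ * (x y * if θ < y then (1:ℝ) else 0)‖ := rfl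
        rw [hrfl]
        exact (measurable_const.mul ((hx.measurable).mul (Measurable.ite
          measurableSet_Ioi measurable_const
          measurable_const))).norm.aestronglyMeasurable
      have hint3 : Integrable (fun y => ‖F (θ, y)‖) μ0 :=
        Integrable.mono' (integrable_const (|Mo.fstar θ| * E.qbar)) hmeas3
          (Filter.Eventually.of_forall (fun y => by rw [norm_norm]; exact hle y))
      have h4 : ∫ y, ‖F (θ, y)‖ ∂μ0 ≤ (μ0 univ).toReal * (|Mo.fstar θ| * E.qbar) := by
        have := integral_mono hint3 (integrable_const _) hle
        rwa [integral_const, smul_eq_mul] at this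
      have h5 : (μ0 univ).toReal = b - a := by
        rw [hμ0, Measure.restrict_apply_univ, Real.volume_Ioc,
          ENNReal.toReal_ofReal (by linarith)]
      rw [Real.norm_eq_abs, abs_of_nonneg (integral_nonneg fun y => norm_nonneg _)]
      rw [h5] at h4
      nlinarith [abs_nonneg (Mo.fstar θ), E.qbar_pos, h4]
  have hswap := integral_integral_swap (f := fun θ y => F (θ, y)) hFint
  -- identify LHS
  have hLHS : (∫ θ, (∫ y, F (θ, y) ∂μ0) ∂μ0)
      = ∫ θ in a..b, (∫ y in θ..b, x y) * Mo.fstar θ := by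
    rw [intervalIntegral.integral_of_le hab]
    apply integral_congr_ae
    apply Filter.eventuallyEq_of_mem (self_mem_ae_restrict measurableSet_Ioc)
    intro θ hθ
    have hinner : (fun y => F (θ, y)) = fun y => Mo.fstar θ * ((Ioi θ).indicator x y) := by
      funext y
      rw [hF]
      simp only
      by_cases h : θ < y
      · rw [if_pos h, Set.indicator_of_mem (mem_Ioi.mpr h)]
        ring
      · rw [if_neg h, Set.indicator_of_notMem (by rw [mem_Ioi]; exact h)]
        ring
    show (∫ y, F (θ, y) ∂μ0) = (∫ y in θ..b, x y) * Mo.fstar θ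
    rw [hinner, integral_const_mul, integral_indicator measurableSet_Ioi]
    rw [hμ0, Measure.restrict_restrict measurableSet_Ioi]
    have hseteq : Ioi θ ∩ Ioc a b = Ioc θ b := by
      ext u
      simp only [mem_inter_iff, mem_Ioi, mem_Ioc]
      constructor
      · rintro ⟨h1, _, h3⟩; exact ⟨h1, h3⟩
      · rintro ⟨h1, h2⟩; exact ⟨h1, hθ.1.trans h1, h2⟩
    rw [hseteq, ← intervalIntegral.integral_of_le hθ.2]
    ring
  -- identify RHS
  have hRHS : (∫ y, (∫ θ, F (θ, y) ∂μ0) ∂μ0) = ∫ y in a..b, x y * Mo.Fstar y := by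
    rw [intervalIntegral.integral_of_le hab]
    apply integral_congr_ae
    apply Filter.eventuallyEq_of_mem (self_mem_ae_restrict measurableSet_Ioc)
    intro y hy
    have hinner : (fun θ => F (θ, y)) = fun θ => x y * ((Iio y).indicator Mo.fstar θ) := by
      funext θ
      rw [hF]
      simp only
      by_cases h : θ < y
      · rw [if_pos h, Set.indicator_of_mem (mem_Iio.mpr h)]
        ring
      · rw [if_neg h, Set.indicator_of_notMem (by rw [mem_Iio]; exact h)]
        ring
    show (∫ θ, F (θ, y) ∂μ0) = x y * Mo.Fstar y
    rw [hinner, integral_const_mul, integral_indicator measurableSet_Iio]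
    rw [hμ0, Measure.restrict_restrict measurableSet_Iio]
    have hseteq : Iio y ∩ Ioc a b = Ioo a y := by
      ext u
      simp only [mem_inter_iff, mem_Iio, mem_Ioc, mem_Ioo]
      constructor
      · rintro ⟨h1, h2, _⟩; exact ⟨h2, h1⟩
      · rintro ⟨h1, h2⟩; exact ⟨h2, h1, (h2.le.trans hy.2)⟩
    rw [hseteq]
    have hIoo : (∫ θ in Ioo a y, Mo.fstar θ) = ∫ θ in Ioc a y, Mo.fstar θ := by
      rw [integral_Ioc_eq_integral_Ioo]
    rw [hIoo, ← intervalIntegral.integral_of_le (hy.1.le.trans (le_refl y))]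
    rw [Mo.Fstar_ac y ⟨hy.1.le, hy.2⟩]
  rw [← hLHS, ← hRHS]
  exact hswap

end Aux

namespace Aux

variable {E : Env}

lemma intInt_congr {f g : ℝ → ℝ} {a b : ℝ} (hab : a ≤ b) (h : ∀ θ ∈ Ioc a b, f θ = g θ)
    (hg : IntervalIntegrable g volume a b) : IntervalIntegrable f volume a b := by
  constructor
  · apply (hg.1).congr
    apply Filter.eventuallyEq_of_mem (self_mem_ae_restrict measurableSet_Ioc)
    intro θ hθ
    exact (h θ hθ).symm
  · have : Ioc b a = ∅ := Ioc_eq_empty (not_lt.mpr hab)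
    rw [this]
    exact integrableOn_empty

lemma bdd_int {g : ℝ → ℝ} (hg : AEStronglyMeasurable g (volume.restrict (Ioc E.θl E.θu)))
    {C : ℝ} (hb : ∀ θ ∈ Ioc E.θl E.θu, |g θ| ≤ C) :
    IntervalIntegrable g volume E.θl E.θu := by
  constructor
  · apply Integrable.mono' (integrable_const C) hg
    rw [ae_restrict_iff' measurableSet_Ioc]
    exact Filter.Eventually.of_forall (fun θ hθ => by
      rw [Real.norm_eq_abs]; exact hb θ hθ)
  · have : Ioc E.θu E.θl = ∅ := Ioc_eq_empty (not_lt.mpr ab_le)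
    rw [this]
    exact integrableOn_empty

lemma bdd_mul_f_int (Mo : Model E) {g : ℝ → ℝ}
    (hg : AEStronglyMeasurable g (volume.restrict (Ioc E.θl E.θu)))
    {C : ℝ} (hb : ∀ θ ∈ Ioc E.θl E.θu, |g θ| ≤ C) :
    IntervalIntegrable (fun θ => g θ * Mo.fstar θ) volume E.θl E.θu := by
  constructor
  · apply Integrable.mono' (((fstar_int Mo).1.abs).const_mul C)
    · exact hg.mul (fstar_int Mo).1.aestronglyMeasurable
    · rw [ae_restrict_iff' measurableSet_Ioc]
      apply Filter.Eventually.of_forall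
      intro θ hθ
      rw [Real.norm_eq_abs, abs_mul]
      exact mul_le_mul_of_nonneg_right (hb θ hθ) (abs_nonneg _)
  · have : Ioc E.θu E.θl = ∅ := Ioc_eq_empty (not_lt.mpr ab_le)
    rw [this]
    exact integrableOn_empty

lemma aesm_of_eqOn {g h : ℝ → ℝ} (hmeas : Measurable h)
    (heq : ∀ θ ∈ Ioc E.θl E.θu, g θ = h θ) :
    AEStronglyMeasurable g (volume.restrict (Ioc E.θl E.θu)) := by
  apply AEStronglyMeasurable.congr hmeas.aestronglyMeasurable
  apply Filter.eventuallyEq_of_mem (self_mem_ae_restrict measurableSet_Ioc)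
  intro θ hθ
  exact (heq θ hθ).symm

lemma Fstar_diff (Mo : Model E) {θ θ' : ℝ} (hθ : θ ∈ E.Θ) (hθ' : θ' ∈ E.Θ) (h : θ ≤ θ') :
    Mo.Fstar θ' - Mo.Fstar θ = ∫ y in θ..θ', Mo.fstar y := by
  rw [Mo.Fstar_ac θ hθ, Mo.Fstar_ac θ' hθ']
  have h1 : IntervalIntegrable Mo.fstar volume E.θl θ := by
    apply (fstar_int Mo).mono_set
    rw [uIcc_of_le hθ.1, uIcc_of_le ab_le]
    exact Icc_subset_Icc (le_refl _) hθ.2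
  have h2 : IntervalIntegrable Mo.fstar volume θ θ' := by
    apply (fstar_int Mo).mono_set
    rw [uIcc_of_le h, uIcc_of_le ab_le]
    exact Icc_subset_Icc hθ.1 hθ'.2
  rw [← intervalIntegral.integral_add_adjacent_intervals h1 h2]
  ring

lemma Fstar_mono (Mo : Model E) {θ θ' : ℝ} (hθ : θ ∈ E.Θ) (hθ' : θ' ∈ E.Θ) (h : θ ≤ θ') :
    Mo.Fstar θ ≤ Mo.Fstar θ' := by
  have := Fstar_diff Mo hθ hθ' h
  have hnn : 0 ≤ ∫ y in θ..θ', Mo.fstar y := by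
    apply intervalIntegral.integral_nonneg h
    intro u hu
    exact (Mo.fstar_pos u ⟨hθ.1.trans hu.1, hu.2.trans hθ'.2⟩).le
  linarith

lemma Fstar_le_one (Mo : Model E) {θ : ℝ} (hθ : θ ∈ E.Θ) : Mo.Fstar θ ≤ 1 := by
  have := Fstar_mono Mo hθ θu_mem hθ.2
  rw [Mo.Fstar_u] at this
  exact this

lemma int_f_one (Mo : Model E) : (∫ θ in E.θl..E.θu, Mo.fstar θ) = 1 := by
  rw [← Mo.Fstar_ac E.θu θu_mem, Mo.Fstar_u]

lemma I_cont {x : ℝ → ℝ} (hx : Antitone x) :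
    Continuous (fun θ => ∫ y in θ..E.θu, x y) := by
  have : (fun θ => ∫ y in θ..E.θu, x y) = fun θ => -(∫ y in E.θu..θ, x y) := by
    funext θ
    rw [← intervalIntegral.integral_symm]
  rw [this]
  exact (intervalIntegral.continuous_primitive
    (fun u v => ((hx.antitoneOn _).intervalIntegrable)) E.θu).neg

lemma I_bound {x : ℝ → ℝ} (hxm : ∀ θ, x θ ∈ Icc (0:ℝ) E.qbar) {θ : ℝ}
    (hθ : θ ∈ Icc E.θl E.θu) :
    |∫ y in θ..E.θu, x y| ≤ E.qbar * (E.θu - E.θl) := by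
  have hb := intervalIntegral.norm_integral_le_of_norm_le_const (C := E.qbar)
    (f := x) (a := θ) (b := E.θu) (fun y _ => by
      rw [Real.norm_eq_abs, abs_of_nonneg (hxm y).1]; exact (hxm y).2)
  rw [Real.norm_eq_abs] at hb
  have h2 : |E.θu - θ| ≤ E.θu - E.θl := by
    rw [abs_of_nonneg (by linarith [hθ.2])]
    linarith [hθ.1]
  calc |∫ y in θ..E.θu, x y| ≤ E.qbar * |E.θu - θ| := hb
    _ ≤ E.qbar * (E.θu - E.θl) := by nlinarith [E.qbar_pos]

lemma Vstar_eq_Vc (Mo : Model E) {s : ℝ} (hs : s ∈ Icc (0:ℝ) E.qbar) :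
    Mo.Vstar s = Vc Mo.DstarDemand s := (Vc_eq Mo.DstarDemand hs).symm

lemma zstar_bound (Mo : Model E) : ∃ C : ℝ, ∀ θ ∈ E.Θ, |Mo.zstar θ| ≤ C := by
  obtain ⟨C, hC⟩ := (isCompact_Icc (a := E.θl) (b := E.θu)).exists_bound_of_continuousOn
    Mo.zstar_cont
  exact ⟨C, fun θ hθ => by
    have := hC θ hθ
    rwa [Real.norm_eq_abs] at this⟩

lemma gJ_aesm (Mo : Model E) {x : ℝ → ℝ} (hx : Antitone x)
    (hxm : ∀ θ, x θ ∈ Icc (0:ℝ) E.qbar) :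
    AEStronglyMeasurable (fun θ => Mo.Vstar (x θ) - Mo.zstar θ * x θ)
      (volume.restrict (Ioc E.θl E.θu)) := by
  apply aesm_of_eqOn (h := fun θ => Vc Mo.DstarDemand (x θ) - Mo.zstar (clamp E θ) * x θ)
  · apply Measurable.sub
    · exact (Vc_cont Mo.DstarDemand).measurable.comp hx.measurable
    · apply Measurable.mul _ hx.measurable
      exact (Mo.zstar_cont.comp_continuous clamp_cont (fun θ => clamp_mem θ)).measurable
  · intro θ hθ
    rw [Vstar_eq_Vc Mo (hxm θ), clamp_id (Ioc_subset_Icc_self hθ)]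

lemma gJ_bound (Mo : Model E) {x : ℝ → ℝ} (hxm : ∀ θ, x θ ∈ Icc (0:ℝ) E.qbar) :
    ∃ C : ℝ, ∀ θ ∈ Ioc E.θl E.θu, |Mo.Vstar (x θ) - Mo.zstar θ * x θ| ≤ C := by
  obtain ⟨C1, hC1⟩ := Vc_bound Mo.DstarDemand
  obtain ⟨C2, hC2⟩ := zstar_bound Mo
  refine ⟨C1 + C2 * E.qbar, fun θ hθ => ?_⟩
  have h1 : |Mo.Vstar (x θ)| ≤ C1 := by
    rw [Vstar_eq_Vc Mo (hxm θ)]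
    have := hC1 (x θ) (hxm θ)
    rwa [Vc_eq Mo.DstarDemand (hxm θ)]
  have h2 : |Mo.zstar θ * x θ| ≤ C2 * E.qbar := by
    rw [abs_mul]
    apply mul_le_mul (hC2 θ (Ioc_subset_Icc_self hθ)) _ (abs_nonneg _)
      ((abs_nonneg _).trans (hC2 θ (Ioc_subset_Icc_self hθ)))
    rw [abs_of_nonneg (hxm θ).1]
    exact (hxm θ).2
  calc |Mo.Vstar (x θ) - Mo.zstar θ * x θ| ≤ |Mo.Vstar (x θ)| + |Mo.zstar θ * x θ| :=
        abs_sub _ _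
    _ ≤ C1 + C2 * E.qbar := by linarith

lemma gJ_int (Mo : Model E) {x : ℝ → ℝ} (hx : Antitone x)
    (hxm : ∀ θ, x θ ∈ Icc (0:ℝ) E.qbar) :
    IntervalIntegrable (fun θ => (Mo.Vstar (x θ) - Mo.zstar θ * x θ) * Mo.fstar θ)
      volume E.θl E.θu := by
  obtain ⟨C, hC⟩ := gJ_bound Mo hxm
  exact bdd_mul_f_int Mo (gJ_aesm Mo hx hxm) hC

lemma gA_aesm (Mo : Model E) {x : ℝ → ℝ} (hx : Antitone x)
    (hxm : ∀ θ, x θ ∈ Icc (0:ℝ) E.qbar) :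
    AEStronglyMeasurable (fun θ => Mo.Vstar (x θ) - θ * x θ - ∫ y in θ..E.θu, x y)
      (volume.restrict (Ioc E.θl E.θu)) := by
  apply aesm_of_eqOn
    (h := fun θ => Vc Mo.DstarDemand (x θ) - θ * x θ - ∫ y in θ..E.θu, x y)
  · apply Measurable.sub
    · apply Measurable.sub
      · exact (Vc_cont Mo.DstarDemand).measurable.comp hx.measurable
      · exact measurable_id.mul hx.measurable
    · exact (I_cont hx).measurable
  · intro θ hθ
    rw [Vstar_eq_Vc Mo (hxm θ)]

lemma gA_bound (Mo : Model E) {x : ℝ → ℝ} (hxm : ∀ θ, x θ ∈ Icc (0:ℝ) E.qbar) :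
    ∃ C : ℝ, ∀ θ ∈ Ioc E.θl E.θu,
      |Mo.Vstar (x θ) - θ * x θ - ∫ y in θ..E.θu, x y| ≤ C := by
  obtain ⟨C1, hC1⟩ := Vc_bound Mo.DstarDemand
  set B := max |E.θl| |E.θu| with hB
  refine ⟨C1 + B * E.qbar + E.qbar * (E.θu - E.θl), fun θ hθ => ?_⟩
  have hθI : θ ∈ Icc E.θl E.θu := Ioc_subset_Icc_self hθ
  have h1 : |Mo.Vstar (x θ)| ≤ C1 := by
    rw [Vstar_eq_Vc Mo (hxm θ)]
    have := hC1 (x θ) (hxm θ)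
    rwa [Vc_eq Mo.DstarDemand (hxm θ)]
  have h2 : |θ * x θ| ≤ B * E.qbar := by
    rw [abs_mul]
    have hθa : |θ| ≤ B := by
      rw [hB, abs_le]
      constructor
      · have := neg_abs_le E.θl
        have := le_max_left |E.θl| |E.θu|
        linarith [hθI.1]
      · have := le_abs_self E.θu
        have := le_max_right |E.θl| |E.θu|
        linarith [hθI.2]
    have hxa : |x θ| ≤ E.qbar := by
      rw [abs_of_nonneg (hxm θ).1]
      exact (hxm θ).2
    have hB0 : 0 ≤ B := le_trans (abs_nonneg _) (le_max_left _ _)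
    exact mul_le_mul hθa hxa (abs_nonneg _) hB0
  have h3 := I_bound hxm hθI
  calc |Mo.Vstar (x θ) - θ * x θ - ∫ y in θ..E.θu, x y|
      ≤ |Mo.Vstar (x θ)| + |θ * x θ| + |∫ y in θ..E.θu, x y| := by
        apply (abs_sub _ _).trans
        gcongr
        exact abs_sub _ _
    _ ≤ C1 + B * E.qbar + E.qbar * (E.θu - E.θl) := by linarith

lemma gA_int (Mo : Model E) {x : ℝ → ℝ} (hx : Antitone x)
    (hxm : ∀ θ, x θ ∈ Icc (0:ℝ) E.qbar) :
    IntervalIntegrable (fun θ =>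
      (Mo.Vstar (x θ) - θ * x θ - ∫ y in θ..E.θu, x y) * Mo.fstar θ) volume E.θl E.θu := by
  obtain ⟨C, hC⟩ := gA_bound Mo hxm
  exact bdd_mul_f_int Mo (gA_aesm Mo hx hxm) hC

lemma gF_int (Mo : Model E) {x : ℝ → ℝ} (hx : Antitone x)
    (hxm : ∀ θ, x θ ∈ Icc (0:ℝ) E.qbar) :
    IntervalIntegrable (fun θ => x θ * Mo.Fstar θ) volume E.θl E.θu := by
  apply bdd_int (C := E.qbar * 1)
  · apply aesm_of_eqOn (h := fun θ => x θ * Mo.Fstar (clamp E θ))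
    · apply hx.measurable.mul
      have hFm : Monotone (fun θ => Mo.Fstar (clamp E θ)) := by
        intro u v huv
        exact Fstar_mono Mo (clamp_mem u) (clamp_mem v) (clamp_mono huv)
      exact hFm.measurable
    · intro θ hθ
      rw [clamp_id (Ioc_subset_Icc_self hθ)]
  · intro θ hθ
    rw [abs_mul]
    apply mul_le_mul
    · rw [abs_of_nonneg (hxm θ).1]; exact (hxm θ).2
    · rw [abs_of_nonneg (Fstar_nonneg Mo (Ioc_subset_Icc_self hθ))]
      exact Fstar_le_one Mo (Ioc_subset_Icc_self hθ)
    · exact abs_nonneg _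
    · exact E.qbar_pos.le

lemma gI_int (Mo : Model E) {x : ℝ → ℝ} (hx : Antitone x)
    (hxm : ∀ θ, x θ ∈ Icc (0:ℝ) E.qbar) :
    IntervalIntegrable (fun θ => (∫ y in θ..E.θu, x y) * Mo.fstar θ) volume E.θl E.θu := by
  apply bdd_mul_f_int Mo (C := E.qbar * (E.θu - E.θl))
  · exact (I_cont hx).aestronglyMeasurable.restrict
  · intro θ hθ
    exact I_bound hxm (Ioc_subset_Icc_self hθ)

/-- Integration by parts: the "A-form" of welfare equals virtual surplus `J`. -/
lemma myA_eq_J (Mo : Model E) {x : ℝ → ℝ} (hx : Antitone x)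
    (hxm : ∀ θ, x θ ∈ Icc (0:ℝ) E.qbar) :
    (∫ θ in E.θl..E.θu, (Mo.Vstar (x θ) - θ * x θ - ∫ y in θ..E.θu, x y) * Mo.fstar θ)
      = Mo.J x := by
  have hsplit : ∀ θ ∈ Icc E.θl E.θu,
      (Mo.Vstar (x θ) - θ * x θ - ∫ y in θ..E.θu, x y) * Mo.fstar θ
        = ((Mo.Vstar (x θ) - Mo.zstar θ * x θ) * Mo.fstar θ + x θ * Mo.Fstar θ)
          - (∫ y in θ..E.θu, x y) * Mo.fstar θ := by
    intro θ hθ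
    have hf := Mo.fstar_pos θ hθ
    unfold Model.zstar
    field_simp
    ring
  rw [intervalIntegral.integral_congr (g := fun θ =>
    ((Mo.Vstar (x θ) - Mo.zstar θ * x θ) * Mo.fstar θ + x θ * Mo.Fstar θ)
      - (∫ y in θ..E.θu, x y) * Mo.fstar θ) (by
    intro θ hθ
    rw [uIcc_of_le ab_le] at hθ
    exact hsplit θ hθ)]
  rw [intervalIntegral.integral_sub ((gJ_int Mo hx hxm).add (gF_int Mo hx hxm))
    (gI_int Mo hx hxm)]
  rw [intervalIntegral.integral_add (gJ_int Mo hx hxm) (gF_int Mo hx hxm)]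
  have hswap := fubini_swap Mo hx hxm
  unfold Model.J
  linarith [hswap]

end Aux

namespace Aux

variable {E : Env}

lemma qt_anti {q : ℝ → ℝ} (hq : AntitoneOn q E.Θ) : Antitone (fun θ => q (clamp E θ)) :=
  fun u v huv => hq (clamp_mem u) (clamp_mem v) (clamp_mono huv)

lemma WStar_eq_J (Mo : Model E) {q : ℝ → ℝ} (hq : E.IsSchedule q) :
    Mo.WStar q (fun θ => ∫ y in θ..E.θu, q y) = Mo.J q := by
  obtain ⟨hanti, hbound⟩ := hq
  set qt : ℝ → ℝ := fun θ => q (clamp E θ) with hqt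
  have hqta : Antitone qt := qt_anti hanti
  have hqtm : ∀ θ, qt θ ∈ Icc (0:ℝ) E.qbar := fun θ => hbound _ (clamp_mem θ)
  have heq1 : ∀ θ ∈ Icc E.θl E.θu, q θ = qt θ := by
    intro θ hθ
    rw [hqt]
    simp only
    rw [clamp_id hθ]
  have heqI : ∀ θ ∈ Icc E.θl E.θu, (∫ y in θ..E.θu, q y) = ∫ y in θ..E.θu, qt y := by
    intro θ hθ
    apply intervalIntegral.integral_congr
    intro y hy
    rw [uIcc_of_le hθ.2] at hy
    exact heq1 y ⟨hθ.1.trans hy.1, hy.2⟩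
  unfold Model.WStar
  rw [intervalIntegral.integral_congr (g := fun θ =>
      (Mo.Vstar (qt θ) - θ * qt θ - ∫ y in θ..E.θu, qt y) * Mo.fstar θ) (by
    intro θ hθ
    rw [uIcc_of_le ab_le] at hθ
    simp only
    rw [heq1 θ hθ, heqI θ hθ])]
  rw [myA_eq_J Mo hqta hqtm]
  unfold Model.J
  apply intervalIntegral.integral_congr
  intro θ hθ
  rw [uIcc_of_le ab_le] at hθ
  simp only
  rw [heq1 θ hθ]

lemma WtStar_bm (Mo : Model E) :
    Mo.WtStar (phat Mo) (that Mo) = Mo.J (fun θ => Mo.Dstar (phat Mo θ)) := by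
  set x : ℝ → ℝ := fun θ => Mo.Dstar (phat Mo θ) with hx
  have hxa : Antitone x := xhat_anti Mo Mo.DstarDemand
  have hxm : ∀ θ, x θ ∈ Icc (0:ℝ) E.qbar := fun θ => D_mem Mo.DstarDemand _
  unfold Model.WtStar
  rw [intervalIntegral.integral_congr (g := fun θ =>
      (Mo.Vstar (x θ) - θ * x θ - ∫ y in θ..E.θu, x y) * Mo.fstar θ) (by
    intro θ hθ
    rw [uIcc_of_le ab_le] at hθ
    show E.wt (phat Mo) (that Mo) θ Mo.DstarDemand * Mo.fstar θ = _
    unfold Env.wt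
    rw [bm_rent Mo θ Mo.DstarDemand, clamp_id hθ]
    rfl)]
  exact myA_eq_J Mo hxa hxm

lemma WtStar_le_J (Mo : Model E) {p : ℝ → ℝ} {t : ℝ → Demand E → ℝ}
    (hIC : E.EPIC p t) (hIR : E.EPIR p t) :
    Mo.WtStar p t ≤ Mo.J (fun θ => Mo.Dstar (p (clamp E θ))) := by
  set x : ℝ → ℝ := fun θ => Mo.Dstar (p (clamp E θ)) with hx
  have hxa : Antitone x := fun u v huv =>
    (alloc_antitone hIC Mo.DstarDemand) (clamp_mem u) (clamp_mem v) (clamp_mono huv)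
  have hxm : ∀ θ, x θ ∈ Icc (0:ℝ) E.qbar := fun θ => D_mem Mo.DstarDemand _
  set Rb := E.rent p t E.θu Mo.DstarDemand with hRb
  have hRb0 : 0 ≤ Rb := hIR E.θu θu_mem Mo.DstarDemand
  have hcong : ∀ θ ∈ Icc E.θl E.θu,
      E.wt p t θ Mo.DstarDemand * Mo.fstar θ
        = (Mo.Vstar (x θ) - θ * x θ - ∫ y in θ..E.θu, x y) * Mo.fstar θ
          - Rb * Mo.fstar θ := by
    intro θ hθ
    unfold Env.wt
    rw [rent_formula hIC Mo.DstarDemand hθ]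
    have hIeq : (∫ y in θ..E.θu, Mo.DstarDemand.D (p y)) = ∫ y in θ..E.θu, x y := by
      apply intervalIntegral.integral_congr
      intro y hy
      rw [uIcc_of_le hθ.2] at hy
      show Mo.DstarDemand.D (p y) = x y
      rw [hx]
      simp only
      rw [clamp_id ⟨hθ.1.trans hy.1, hy.2⟩]
      rfl
    have hxeq : Mo.DstarDemand.D (p θ) = x θ := by
      rw [hx]
      simp only
      rw [clamp_id hθ]
      rfl
    rw [hIeq, hxeq, ← hRb]
    have hV : Mo.DstarDemand.V (x θ) = Mo.Vstar (x θ) := rfl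
    rw [hV]
    ring
  unfold Model.WtStar
  rw [intervalIntegral.integral_congr (g := fun θ =>
      (Mo.Vstar (x θ) - θ * x θ - ∫ y in θ..E.θu, x y) * Mo.fstar θ - Rb * Mo.fstar θ) (by
    intro θ hθ
    rw [uIcc_of_le ab_le] at hθ
    exact hcong θ hθ)]
  rw [intervalIntegral.integral_sub (gA_int Mo hxa hxm) ((fstar_int Mo).const_mul Rb)]
  rw [myA_eq_J Mo hxa hxm]
  have hcst : (∫ θ in E.θl..E.θu, Rb * Mo.fstar θ) = Rb := by
    rw [intervalIntegral.integral_const_mul, int_f_one, mul_one]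
  rw [hcst]
  linarith

lemma J_mono (Mo : Model E) {x1 x2 : ℝ → ℝ} (h1 : Antitone x1)
    (m1 : ∀ θ, x1 θ ∈ Icc (0:ℝ) E.qbar) (h2 : Antitone x2)
    (m2 : ∀ θ, x2 θ ∈ Icc (0:ℝ) E.qbar)
    (hpt : ∀ θ ∈ Icc E.θl E.θu,
      Mo.Vstar (x1 θ) - Mo.zstar θ * x1 θ ≤ Mo.Vstar (x2 θ) - Mo.zstar θ * x2 θ) :
    Mo.J x1 ≤ Mo.J x2 := by
  unfold Model.J
  apply intervalIntegral.integral_mono_on ab_le (gJ_int Mo h1 m1) (gJ_int Mo h2 m2)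
  intro θ hθ
  have hf := (Mo.fstar_pos θ hθ).le
  nlinarith [hpt θ hθ]

lemma Fstar_lt_one (Mo : Model E) {θ1 : ℝ} (hθ1 : θ1 ∈ Ico E.θl E.θu) : Mo.Fstar θ1 < 1 := by
  have hθm : θ1 ∈ E.Θ := ⟨hθ1.1, hθ1.2.le⟩
  have hd : 1 - Mo.Fstar θ1 = ∫ y in θ1..E.θu, Mo.fstar y := by
    have := Fstar_diff Mo hθm θu_mem hθ1.2.le
    rw [Mo.Fstar_u] at this
    linarith
  by_contra hcon
  push_neg at hcon
  have hle : (∫ y in θ1..E.θu, Mo.fstar y) ≤ 0 := by linarith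
  have hint : IntegrableOn Mo.fstar (Ioc θ1 E.θu) := by
    have := (fstar_int Mo).mono_set (c := θ1) (d := E.θu) (by
      rw [uIcc_of_le hθ1.2.le, uIcc_of_le ab_le]
      exact Icc_subset_Icc hθ1.1 (le_refl _))
    exact this.1
  have hio : (∫ y in θ1..E.θu, Mo.fstar y) = ∫ y in Ioc θ1 E.θu, Mo.fstar y :=
    intervalIntegral.integral_of_le hθ1.2.le
  have hnn : 0 ≤ᵐ[volume.restrict (Ioc θ1 E.θu)] Mo.fstar := by
    apply Filter.eventually_of_mem (self_mem_ae_restrict measurableSet_Ioc)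
    intro y hy
    exact (Mo.fstar_pos y ⟨hθ1.1.trans hy.1.le, hy.2⟩).le
  have hzero : (∫ y in Ioc θ1 E.θu, Mo.fstar y) = 0 :=
    le_antisymm (hio ▸ hle) (integral_nonneg_of_ae hnn)
  have hae := (integral_eq_zero_iff_of_nonneg_ae hnn hint).mp hzero
  have hnullset : volume.restrict (Ioc θ1 E.θu) {y | Mo.fstar y ≠ 0} = 0 :=
    ae_iff.mp hae
  rw [Measure.restrict_apply' measurableSet_Ioc] at hnullset
  have hseteq : {y | Mo.fstar y ≠ 0} ∩ Ioc θ1 E.θu = Ioc θ1 E.θu := by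
    apply inter_eq_self_of_subset_right
    intro y hy
    exact (Mo.fstar_pos y ⟨hθ1.1.trans hy.1.le, hy.2⟩).ne'
  rw [hseteq, Real.volume_Ioc] at hnullset
  rw [ENNReal.ofReal_eq_zero] at hnullset
  linarith [hθ1.2]

lemma J_lt (Mo : Model E) {x1 x2 : ℝ → ℝ} (h1 : Antitone x1)
    (m1 : ∀ θ, x1 θ ∈ Icc (0:ℝ) E.qbar) (h2 : Antitone x2)
    (m2 : ∀ θ, x2 θ ∈ Icc (0:ℝ) E.qbar)
    (hpt : ∀ θ ∈ Icc E.θl E.θu,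
      Mo.Vstar (x1 θ) - Mo.zstar θ * x1 θ ≤ Mo.Vstar (x2 θ) - Mo.zstar θ * x2 θ)
    {θ1 c : ℝ} (hθ1 : θ1 ∈ Ico E.θl E.θu) (hc : 0 < c)
    (hstrict : ∀ θ ∈ Icc θ1 E.θu,
      Mo.Vstar (x1 θ) - Mo.zstar θ * x1 θ + c ≤ Mo.Vstar (x2 θ) - Mo.zstar θ * x2 θ) :
    Mo.J x1 < Mo.J x2 := by
  have hθm : θ1 ∈ E.Θ := ⟨hθ1.1, hθ1.2.le⟩
  have hsub1 : Set.uIcc E.θl θ1 ⊆ Set.uIcc E.θl E.θu := by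
    rw [uIcc_of_le hθ1.1, uIcc_of_le ab_le]
    exact Icc_subset_Icc (le_refl _) hθ1.2.le
  have hsub2 : Set.uIcc θ1 E.θu ⊆ Set.uIcc E.θl E.θu := by
    rw [uIcc_of_le hθ1.2.le, uIcc_of_le ab_le]
    exact Icc_subset_Icc hθ1.1 (le_refl _)
  set g1 : ℝ → ℝ := fun θ => (Mo.Vstar (x1 θ) - Mo.zstar θ * x1 θ) * Mo.fstar θ with hg1
  set g2 : ℝ → ℝ := fun θ => (Mo.Vstar (x2 θ) - Mo.zstar θ * x2 θ) * Mo.fstar θ with hg2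
  have hint1 := gJ_int Mo h1 m1
  have hint2 := gJ_int Mo h2 m2
  have hsplit1 : Mo.J x1 = (∫ θ in E.θl..θ1, g1 θ) + ∫ θ in θ1..E.θu, g1 θ := by
    unfold Model.J
    rw [intervalIntegral.integral_add_adjacent_intervals (hint1.mono_set hsub1)
      (hint1.mono_set hsub2)]
  have hsplit2 : Mo.J x2 = (∫ θ in E.θl..θ1, g2 θ) + ∫ θ in θ1..E.θu, g2 θ := by
    unfold Model.J
    rw [intervalIntegral.integral_add_adjacent_intervals (hint2.mono_set hsub1)
      (hint2.mono_set hsub2)]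
  have hA : (∫ θ in E.θl..θ1, g1 θ) ≤ ∫ θ in E.θl..θ1, g2 θ := by
    apply intervalIntegral.integral_mono_on hθ1.1 (hint1.mono_set hsub1)
      (hint2.mono_set hsub1)
    intro θ hθ
    have hθΘ : θ ∈ Icc E.θl E.θu := ⟨hθ.1, hθ.2.trans hθ1.2.le⟩
    have hf := (Mo.fstar_pos θ hθΘ).le
    nlinarith [hpt θ hθΘ]
  have hB : (∫ θ in θ1..E.θu, g1 θ) + c * (1 - Mo.Fstar θ1) ≤ ∫ θ in θ1..E.θu, g2 θ := by
    have hcf : IntervalIntegrable (fun θ => g1 θ + c * Mo.fstar θ) volume θ1 E.θu := by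
      apply IntervalIntegrable.add (hint1.mono_set hsub2)
      exact ((fstar_int Mo).mono_set hsub2).const_mul c
    have hmono : (∫ θ in θ1..E.θu, (g1 θ + c * Mo.fstar θ)) ≤ ∫ θ in θ1..E.θu, g2 θ := by
      apply intervalIntegral.integral_mono_on hθ1.2.le hcf (hint2.mono_set hsub2)
      intro θ hθ
      have hθΘ : θ ∈ Icc E.θl E.θu := ⟨hθ1.1.trans hθ.1, hθ.2⟩
      have hf := (Mo.fstar_pos θ hθΘ).le
      show (Mo.Vstar (x1 θ) - Mo.zstar θ * x1 θ) * Mo.fstar θ + c * Mo.fstar θ ≤ _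
      nlinarith [hstrict θ hθ]
    have hadd : (∫ θ in θ1..E.θu, (g1 θ + c * Mo.fstar θ))
        = (∫ θ in θ1..E.θu, g1 θ) + c * (1 - Mo.Fstar θ1) := by
      rw [intervalIntegral.integral_add (hint1.mono_set hsub2)
        (((fstar_int Mo).mono_set hsub2).const_mul c)]
      rw [intervalIntegral.integral_const_mul]
      have := Fstar_diff Mo hθm θu_mem hθ1.2.le
      rw [Mo.Fstar_u] at this
      rw [← this]
    linarith [hadd ▸ hmono]
  have hpos : 0 < 1 - Mo.Fstar θ1 := by linarith [Fstar_lt_one Mo hθ1]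
  have : 0 < c * (1 - Mo.Fstar θ1) := mul_pos hc hpos
  linarith [hA, hB, hsplit1, hsplit2]

end Aux

namespace Aux

variable {E : Env}

lemma P_le_z (d : Demand E) {z : ℝ} (hz : d.P E.qbar ≤ z) {σ : ℝ}
    (hσ : σ ∈ Icc (0:ℝ) E.qbar) (h : d.D z ≤ σ) : d.P σ ≤ z := by
  rcases le_or_gt z (d.P 0) with hc | hc
  · have hinv : d.P (d.D z) = z := D_inv'' d hz hc
    rw [← hinv]
    exact d.P_anti.antitoneOn (D_mem d z) hσ h
  · have h0 : d.P σ ≤ d.P 0 := d.P_anti.antitoneOn zero_mem hσ hσ.1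
    linarith

lemma P_lt_z (d : Demand E) {z : ℝ} (hz : d.P E.qbar ≤ z) {σ : ℝ}
    (hσ : σ ∈ Icc (0:ℝ) E.qbar) (h : d.D z < σ) : d.P σ < z := by
  rcases le_or_gt z (d.P 0) with hc | hc
  · have hinv : d.P (d.D z) = z := D_inv'' d hz hc
    rw [← hinv]
    exact d.P_anti (D_mem d z) hσ h
  · have h0 : d.P σ ≤ d.P 0 := d.P_anti.antitoneOn zero_mem hσ hσ.1
    linarith

/-- Strict decrease of `s ↦ V(s) - z s` to the right of the peak `D(z)`. -/
lemma value_dec_lt (d : Demand E) {z s1 s2 : ℝ} (hz : d.P E.qbar ≤ z)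
    (h1 : s1 ∈ Icc (0:ℝ) E.qbar) (h2 : s2 ∈ Icc (0:ℝ) E.qbar)
    (hk : d.D z ≤ s1) (h12 : s1 < s2) : d.V s2 - z * s2 < d.V s1 - z * s1 := by
  set m := (s1 + s2) / 2 with hm
  have hm1 : s1 < m := by simp only [hm]; linarith
  have hm2 : m < s2 := by simp only [hm]; linarith
  have hmm : m ∈ Icc (0:ℝ) E.qbar := mid_mem h1 h2
  have hsplit : d.V s2 - d.V s1 = (∫ u in s1..m, d.P u) + ∫ u in m..s2, d.P u := by
    rw [V_diff d h1 h2, intervalIntegral.integral_add_adjacent_intervals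
      (P_intInt d h1 hmm) (P_intInt d hmm h2)]
  have hb1 : (∫ u in s1..m, d.P u) ≤ (m - s1) * d.P s1 := int_P_le_const d hm1.le h1 hmm
  have hb2 : (∫ u in m..s2, d.P u) ≤ (s2 - m) * d.P m := int_P_le_const d hm2.le hmm h2
  have hP1 : d.P s1 ≤ z := P_le_z d hz h1 hk
  have hPm : d.P m < z := P_lt_z d hz hmm (hk.trans_lt hm1)
  nlinarith [hsplit, hb1, hb2]

lemma value_dec_le (d : Demand E) {z s1 s2 : ℝ} (hz : d.P E.qbar ≤ z)
    (h1 : s1 ∈ Icc (0:ℝ) E.qbar) (h2 : s2 ∈ Icc (0:ℝ) E.qbar)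
    (hk : d.D z ≤ s1) (h12 : s1 ≤ s2) : d.V s2 - z * s2 ≤ d.V s1 - z * s1 := by
  rcases h12.lt_or_eq with h | h
  · exact (value_dec_lt d hz h1 h2 hk h).le
  · rw [h]

/-- `D(z)` is the strict peak of `s ↦ V(s) - z s` on `[0, qbar]`. -/
lemma value_peak (d : Demand E) {z : ℝ} (hz : d.P E.qbar ≤ z) {s : ℝ}
    (hs : s ∈ Icc (0:ℝ) E.qbar) (hne : s ≠ d.D z) :
    d.V s - z * s < d.V (d.D z) - z * d.D z := by
  set y := d.D z with hy
  have hym : y ∈ Icc (0:ℝ) E.qbar := D_mem d z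
  rcases hne.lt_or_gt with hlt | hlt
  · -- s < y : increasing part, use in-range inverse (y > 0 forces z ≤ P 0)
    have hzP0 : z ≤ d.P 0 := by
      by_contra hc
      push_neg at hc
      have : y = 0 := d.D_high z hc
      rw [this] at hlt
      exact absurd hs.1 (not_le.mpr hlt)
    have hPy : d.P y = z := D_inv'' d hz hzP0
    set m := (s + y) / 2 with hm
    have hsm : s < m := by simp only [hm]; linarith
    have hmy : m < y := by simp only [hm]; linarith
    have hmm : m ∈ Icc (0:ℝ) E.qbar := mid_mem hs hym
    have hsplit : d.V y - d.V s = (∫ u in s..m, d.P u) + ∫ u in m..y, d.P u := by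
      rw [V_diff d hs hym, intervalIntegral.integral_add_adjacent_intervals
        (P_intInt d hs hmm) (P_intInt d hmm hym)]
    have hb1 : (m - s) * d.P m ≤ ∫ u in s..m, d.P u := const_le_int_P d hsm.le hs hmm
    have hb2 : (y - m) * d.P y ≤ ∫ u in m..y, d.P u := const_le_int_P d hmy.le hmm hym
    have h3 : z < d.P m := by
      rw [← hPy]
      exact d.P_anti hmm hym hmy
    rw [hPy] at hb2
    nlinarith [hsplit, hb1, hb2]
  · exact value_dec_lt d hz hym hs (le_refl _) hlt

lemma value_peak_le (d : Demand E) {z : ℝ} (hz : d.P E.qbar ≤ z) {s : ℝ}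
    (hs : s ∈ Icc (0:ℝ) E.qbar) :
    d.V s - z * s ≤ d.V (d.D z) - z * d.D z := by
  rcases eq_or_ne s (d.D z) with rfl | hne
  · exact le_refl _
  · exact (value_peak d hz hs hne).le

/-- Projection onto `[L, qbar]` of the peak: `max (D z) L` maximizes `V - z·` there. -/
lemma proj_le (d : Demand E) {z L s : ℝ} (hz : d.P E.qbar ≤ z)
    (hL : L ∈ Icc (0:ℝ) E.qbar) (hs : s ∈ Icc (0:ℝ) E.qbar) (hsL : L ≤ s) :
    d.V s - z * s ≤ d.V (max (d.D z) L) - z * max (d.D z) L := by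
  rcases le_or_gt L (d.D z) with hc | hc
  · rw [max_eq_left hc]
    exact value_peak_le d hz hs
  · rw [max_eq_right hc.le]
    exact value_dec_le d hz hL hs hc.le hsL

lemma proj_lt (d : Demand E) {z L s : ℝ} (hz : d.P E.qbar ≤ z)
    (hL : L ∈ Icc (0:ℝ) E.qbar) (hs : s ∈ Icc (0:ℝ) E.qbar) (hsL : L ≤ s)
    (hne : s ≠ max (d.D z) L) :
    d.V s - z * s < d.V (max (d.D z) L) - z * max (d.D z) L := by
  rcases le_or_gt L (d.D z) with hc | hc
  · rw [max_eq_left hc]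
    rw [max_eq_left hc] at hne
    exact value_peak d hz hs hne
  · rw [max_eq_right hc.le]
    rw [max_eq_right hc.le] at hne
    rcases hsL.lt_or_eq with h | h
    · exact value_dec_lt d hz hL hs hc.le h
    · exact absurd h.symm hne

lemma zstar_ge_PQ (Mo : Model E) {θ : ℝ} (hθ : θ ∈ E.Θ) :
    Mo.DstarDemand.P E.qbar ≤ Mo.zstar θ :=
  ((PQ_lt_θl Mo.DstarDemand).trans_le (hθ.1.trans (zstar_ge Mo hθ))).le

lemma xhat_eq (Mo : Model E) (θ : ℝ) :
    Mo.Dstar (phat Mo θ) = max (Mo.Dstar (Mo.zstar (clamp E θ))) (Mo.Dstar E.θu) := by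
  unfold phat
  rcases le_total (Mo.zstar (clamp E θ)) E.θu with h | h
  · rw [min_eq_left h]
    have : Mo.Dstar E.θu ≤ Mo.Dstar (Mo.zstar (clamp E θ)) := D_antitone Mo.DstarDemand h
    rw [max_eq_left this]
  · rw [min_eq_right h]
    have : Mo.Dstar (Mo.zstar (clamp E θ)) ≤ Mo.Dstar E.θu := D_antitone Mo.DstarDemand h
    rw [max_eq_right this]

end Aux

namespace Aux

variable {E : Env}

/-- The candidate optimal schedule `q* = max(qBM, q_ℓ)` (clamped). -/
def qs (Mo : Model E) (θ : ℝ) : ℝ := max (Mo.qBM (clamp E θ)) E.ql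

lemma qBM_clamp_anti (Mo : Model E) : Antitone (fun θ => Mo.qBM (clamp E θ)) := by
  intro u v huv
  unfold Model.qBM
  exact D_antitone Mo.DstarDemand
    (zstar_mono' Mo (clamp_mem u) (clamp_mem v) (clamp_mono huv))

lemma qs_anti (Mo : Model E) : Antitone (qs Mo) := by
  intro u v huv
  exact max_le_max (qBM_clamp_anti Mo huv) (le_refl _)

lemma qs_mem (Mo : Model E) (θ : ℝ) : qs Mo θ ∈ Icc (0:ℝ) E.qbar := by
  constructor
  · exact le_trans (ql_mem (E := E)).1 (le_max_right _ _)
  · exact max_le (D_mem Mo.DstarDemand _).2 (ql_mem (E := E)).2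

lemma zstar_eq_qBM (Mo : Model E) (x : ℝ) :
    max (Mo.Dstar (x + Mo.Fstar x / Mo.fstar x)) (E.Dl E.θu) = max (Mo.qBM x) E.ql := rfl

/-- On `Θ`, the statement's integrand is `qs`. -/
lemma qs_int_congr (Mo : Model E) {c d : ℝ} (hc : E.θl ≤ c) (hcd : c ≤ d) (hd : d ≤ E.θu) :
    (∫ x in c..d, max (Mo.Dstar (x + Mo.Fstar x / Mo.fstar x)) (E.Dl E.θu))
      = ∫ x in c..d, qs Mo x := by
  apply intervalIntegral.integral_congr
  intro x hx
  rw [uIcc_of_le hcd] at hx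
  show Mo.Dstar (x + Mo.Fstar x / Mo.fstar x) ⊔ E.Dl E.θu = qs Mo x
  unfold qs
  rw [clamp_id ⟨hc.trans hx.1, hx.2.trans hd⟩]
  rfl

section Cond1

variable (Mo : Model E)
variable (hcond : ∀ θ ∈ E.Θ,
    (∫ x in θ..E.θu, max (Mo.Dstar (x + Mo.Fstar x / Mo.fstar x)) (E.Dl E.θu)) ≤
      ∫ x in θ..E.θu, E.Dl x)

include hcond

lemma cond1_m {w : ℝ} (hw : w ∈ E.Θ) :
    (∫ x in w..E.θu, qs Mo x) ≤ ∫ x in w..E.θu, E.Dl x := by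
  have := hcond w hw
  rwa [qs_int_congr Mo hw.1 hw.2 (le_refl _)] at this

lemma cond1_qs_le_Dl {θ : ℝ} (hθ : θ ∈ Ico E.θl E.θu) : qs Mo E.θu ≤ E.Dl θ := by
  have hθm : θ ∈ E.Θ := ⟨hθ.1, hθ.2.le⟩
  have h1 : (E.θu - θ) * qs Mo E.θu ≤ ∫ x in θ..E.θu, qs Mo x :=
    const_le_int_anti ((qs_anti Mo).antitoneOn (Icc E.θl E.θu)) hθ.1 hθ.2.le (le_refl _)
  have h2 := cond1_m Mo hcond hθm
  have h3 : (∫ x in θ..E.θu, E.Dl x) ≤ (E.θu - θ) * E.Dl θ := by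
    have := int_le_const_anti ((D_antitone E.DlDemand).antitoneOn (Icc E.θl E.θu))
      hθ.1 hθ.2.le (le_refl _)
    exact this
  have hpos : 0 < E.θu - θ := by linarith [hθ.2]
  nlinarith [h1, h2, h3]

lemma cond1_qBM_θu_le : Mo.qBM E.θu ≤ E.ql := by
  by_contra hcon
  push_neg at hcon
  set L := qs Mo E.θu with hLdef
  have hLeq : L = Mo.qBM E.θu := by
    rw [hLdef]
    unfold qs
    rw [clamp_id θu_mem]
    exact max_eq_left hcon.le
  have hLm : L ∈ Icc (0:ℝ) E.qbar := qs_mem Mo E.θu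
  have hLgt : E.ql < L := by rw [hLeq]; exact hcon
  have hPl : E.Pl L < E.θu := by
    have := E.Pl_anti ql_mem hLm hLgt
    rwa [show E.Pl E.ql = E.θu from D_inv' E.DlDemand θu_mem] at this
  set θ1 := (max E.θl (E.Pl L) + E.θu) / 2 with hθ1def
  have hθ11 : E.θl < θ1 := by
    have h1 : E.θl ≤ max E.θl (E.Pl L) := le_max_left _ _
    have := E.θlu
    simp only [hθ1def]
    linarith
  have hθ12 : θ1 < E.θu := by
    have h1 : max E.θl (E.Pl L) < E.θu := max_lt E.θlu hPl
    simp only [hθ1def]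
    linarith
  have hgt : E.Pl L < θ1 := by
    have h1 : E.Pl L ≤ max E.θl (E.Pl L) := le_max_right _ _
    simp only [hθ1def]
    linarith
  have hle := cond1_qs_le_Dl Mo hcond (θ := θ1) ⟨hθ11.le, hθ12⟩
  -- L ≤ Dl θ1 ⇒ θ1 = Pl (Dl θ1) ≤ Pl L
  have hfin : θ1 ≤ E.Pl L := by
    have h1 : E.Pl (E.Dl θ1) ≤ E.Pl L :=
      E.Pl_anti.antitoneOn hLm (D_mem E.DlDemand θ1) hle
    have h2 : E.Pl (E.Dl θ1) = θ1 := D_inv' E.DlDemand ⟨hθ11.le, hθ12.le⟩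
    rwa [h2] at h1
  linarith

lemma qs_θu : qs Mo E.θu = E.ql := by
  unfold qs
  rw [clamp_id θu_mem]
  exact max_eq_right (cond1_qBM_θu_le Mo hcond)

/-- Feasibility of `q*` under condition (1) and `D*(θl) = D̲(θl)`. -/
lemma qs_feasible (hDl : Mo.Dstar E.θl = E.Dl E.θl) : E.FeasibleROPT (qs Mo) := by
  constructor
  · exact ⟨(qs_anti Mo).antitoneOn _, fun θ _ => qs_mem Mo θ⟩
  intro θ hθ
  set y := qs Mo θ with hy
  have hym : y ∈ Icc (0:ℝ) E.qbar := qs_mem Mo θ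
  have hyl : E.ql ≤ y := le_max_right _ _
  have hyu : y ≤ E.Dl E.θl := by
    rw [hy]
    unfold qs Model.qBM
    apply max_le
    · have h1 : Mo.zstar E.θl ≤ Mo.zstar (clamp E θ) :=
        zstar_mono' Mo θl_mem (clamp_mem θ) (clamp_mem θ).1
      have h2 : Mo.Dstar (Mo.zstar (clamp E θ)) ≤ Mo.Dstar (Mo.zstar E.θl) :=
        D_antitone Mo.DstarDemand h1
      rw [zstar_θl Mo, hDl] at h2
      exact h2
    · exact D_antitone E.DlDemand E.θlu.le
  set w := E.Pl y with hw
  have hwl : E.θl ≤ w := by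
    have h1 : E.Pl (E.Dl E.θl) ≤ E.Pl y :=
      E.Pl_anti.antitoneOn hym (D_mem E.DlDemand E.θl) hyu
    have h2 : E.Pl (E.Dl E.θl) = E.θl := D_inv' E.DlDemand θl_mem
    rwa [h2] at h1
  have hwu : w ≤ E.θu := by
    have h1 : E.Pl y ≤ E.Pl E.ql := E.Pl_anti.antitoneOn ql_mem hym hyl
    have h2 : E.Pl E.ql = E.θu := D_inv' E.DlDemand θu_mem
    rwa [h2] at h1
  have hwm : w ∈ E.Θ := ⟨hwl, hwu⟩
  have hDlw : E.Dl w = y := D_of_P E.DlDemand hym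
  -- area identity: Vl y - w y = Gstar + ∫_w^θu Dl
  have harea : E.Vl y - w * y = E.Gstar + ∫ v in w..E.θu, E.Dl v := by
    have := area E.DlDemand (w1 := w) (w2 := E.θu)
      ((PQ_lt_θl E.DlDemand).trans_le hwl).le hwu (θu_lt_P0 E.DlDemand).le
    rw [DlD, DlV] at this
    rw [hDlw] at this
    unfold Env.Gstar Env.ql
    linarith [this]
  -- split the rent integral at w
  have hqs_int : ∀ u v : ℝ, IntervalIntegrable (qs Mo) volume u v :=
    fun u v => ((qs_anti Mo).antitoneOn _).intervalIntegrable
  have hsplit : (∫ v in θ..E.θu, qs Mo v)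
      = (∫ v in θ..w, qs Mo v) + ∫ v in w..E.θu, qs Mo v := by
    rw [intervalIntegral.integral_add_adjacent_intervals (hqs_int θ w) (hqs_int w E.θu)]
  have hm := cond1_m Mo hcond hwm
  -- second piece: (w - θ) y - ∫_θ^w qs ≥ 0
  have hsecond : (∫ v in θ..w, qs Mo v) ≤ w * y - θ * y := by
    rcases le_total θ w with hc | hc
    · have h1 := int_le_const_anti ((qs_anti Mo).antitoneOn (Icc θ E.θu))
        (le_refl θ) hc hwu
      rw [← hy] at h1
      nlinarith [h1]
    · have h1 : (θ - w) * qs Mo θ ≤ ∫ v in w..θ, qs Mo v :=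
        const_le_int_anti ((qs_anti Mo).antitoneOn (Icc w E.θu))
          (le_refl w) hc hθ.2
      have h2 : (∫ v in θ..w, qs Mo v) = -∫ v in w..θ, qs Mo v :=
        intervalIntegral.integral_symm _ _
      rw [← hy] at h1
      rw [h2]
      nlinarith [h1]
  unfold Env.Wl
  rw [← hy, hsplit]
  have hDl_int : (∫ v in w..E.θu, qs Mo v) ≤ ∫ v in w..E.θu, E.Dl v := hm
  linarith [harea, hsecond, hDl_int]

end Cond1

end Aux

namespace Aux

variable {E : Env}

lemma qBM_mem (Mo : Model E) (θ : ℝ) : Mo.qBM θ ∈ Icc (0:ℝ) E.qbar := D_mem Mo.DstarDemand _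

lemma cond1_theta1 (Mo : Model E)
    (hcond : ∀ θ ∈ E.Θ,
      (∫ x in θ..E.θu, max (Mo.Dstar (x + Mo.Fstar x / Mo.fstar x)) (E.Dl E.θu)) ≤
        ∫ x in θ..E.θu, E.Dl x)
    (hgap : E.Dl E.θu < Mo.Dstar E.θu) :
    ∃ θ1, θ1 ∈ Ico E.θl E.θu ∧ Mo.qBM θ1 < (E.ql + Mo.Dstar E.θu) / 2 := by
  set K1 := (E.ql + Mo.Dstar E.θu) / 2 with hK1
  have hgap' : E.ql < Mo.Dstar E.θu := hgap
  have hql_lt : E.ql < K1 := by simp only [hK1]; linarith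
  have hK1_lt : K1 < Mo.Dstar E.θu := by simp only [hK1]; linarith
  have hK1m : K1 ∈ Icc (0:ℝ) E.qbar := by
    constructor
    · have := (ql_mem (E := E)).1; linarith
    · have hDq : Mo.Dstar E.θu ≤ E.qbar := (D_mem Mo.DstarDemand E.θu).2
      show K1 ≤ E.qbar
      linarith
  by_contra hcon
  push_neg at hcon
  have hz_le : ∀ θ ∈ Ico E.θl E.θu, Mo.zstar θ ≤ Mo.Pstar K1 := by
    intro θ hθ
    have hK := hcon θ hθ
    have hθm : θ ∈ E.Θ := ⟨hθ.1, hθ.2.le⟩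
    have hin : Mo.zstar θ ≤ Mo.Pstar 0 := by
      by_contra hout
      push_neg at hout
      have hq0 : Mo.qBM θ = 0 := Mo.Dstar_high _ hout
      rw [hq0] at hK
      have := ql_pos (E := E)
      linarith
    have hinv : Mo.Pstar (Mo.qBM θ) = Mo.zstar θ :=
      D_inv'' Mo.DstarDemand (zstar_ge_PQ Mo hθm) hin
    have hP : Mo.Pstar (Mo.qBM θ) ≤ Mo.Pstar K1 :=
      Mo.Pstar_anti.antitoneOn hK1m (qBM_mem Mo θ) hK
    rwa [hinv] at hP
  have hzu : Mo.zstar E.θu ≤ Mo.Pstar K1 := by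
    by_contra hout
    push_neg at hout
    have hcw := Mo.zstar_cont E.θu θu_mem
    rw [Metric.continuousWithinAt_iff] at hcw
    obtain ⟨δ, hδ0, hδ⟩ := hcw (Mo.zstar E.θu - Mo.Pstar K1) (by linarith)
    set θ := max E.θl (E.θu - δ/2) with hθdef
    have hθ1 : θ ∈ Ico E.θl E.θu := by
      constructor
      · exact le_max_left _ _
      · apply max_lt E.θlu
        linarith
    have hθΘ : θ ∈ E.Θ := ⟨hθ1.1, hθ1.2.le⟩
    have hdist : dist θ E.θu < δ := by
      rw [Real.dist_eq, abs_of_nonpos (by linarith [hθ1.2])]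
      have h2 : E.θu - δ/2 ≤ θ := le_max_right _ _
      linarith
    have habs := hδ hθΘ hdist
    rw [Real.dist_eq] at habs
    have h2 := hz_le θ hθ1
    have h3 := abs_lt.mp habs
    have hz1 : θ + Mo.Fstar θ / Mo.fstar θ = Mo.zstar θ := rfl
    have hz2 : E.θu + Mo.Fstar E.θu / Mo.fstar E.θu = Mo.zstar E.θu := rfl
    rw [hz1, hz2] at h3
    linarith [h3.1]
  have hfinal : K1 ≤ Mo.qBM E.θu := by
    have h1 : Mo.Dstar (Mo.Pstar K1) = K1 := D_of_P Mo.DstarDemand hK1m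
    have h2 : Mo.Dstar (Mo.Pstar K1) ≤ Mo.Dstar (Mo.zstar E.θu) :=
      D_antitone Mo.DstarDemand hzu
    rw [h1] at h2
    exact h2
  have := cond1_qBM_θu_le Mo hcond
  linarith

/-- Part 1: quantity strictly dominates price. -/
lemma part1_main (Mo : Model E)
    (hDl : Mo.Dstar E.θl = E.Dl E.θl) (hgap : E.Dl E.θu < Mo.Dstar E.θu)
    (hcond : ∀ θ ∈ E.Θ,
      (∫ x in θ..E.θu, max (Mo.Dstar (x + Mo.Fstar x / Mo.fstar x)) (E.Dl E.θu)) ≤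
        ∫ x in θ..E.θu, E.Dl x)
    (qOPT : ℝ → ℝ) (hsol : Mo.SolvesROPT qOPT)
    (p : ℝ → ℝ) (t : ℝ → Demand E → ℝ) (hRO : Mo.RobustlyOptimalPR p t) :
    Mo.WtStar p t < Mo.WStar qOPT (fun θ => ∫ y in θ..E.θu, qOPT y) := by
  obtain ⟨hSL, _⟩ := hRO
  have hIC : E.EPIC p t := hSL.1.2.1
  have hIR : E.EPIR p t := hSL.1.2.2
  have HSL := shortlist_pointwise Mo hSL
  have hpb : p E.θu = E.θu := price_at_top hIR HSL
  set xt : ℝ → ℝ := fun θ => Mo.Dstar (p (clamp E θ)) with hxt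
  set xh : ℝ → ℝ := fun θ => Mo.Dstar (phat Mo θ) with hxh
  have hxta : Antitone xt := fun u v huv =>
    (alloc_antitone hIC Mo.DstarDemand) (clamp_mem u) (clamp_mem v) (clamp_mono huv)
  have hxtm : ∀ θ, xt θ ∈ Icc (0:ℝ) E.qbar := fun θ => D_mem Mo.DstarDemand _
  have hxha : Antitone xh := xhat_anti Mo Mo.DstarDemand
  have hxhm : ∀ θ, xh θ ∈ Icc (0:ℝ) E.qbar := fun θ => D_mem Mo.DstarDemand _
  have h1 : Mo.WtStar p t ≤ Mo.J xt := WtStar_le_J Mo hIC hIR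
  have hxt_ge : ∀ θ ∈ Icc E.θl E.θu, Mo.Dstar E.θu ≤ xt θ := by
    intro θ hθ
    have heq : xt E.θu = Mo.Dstar E.θu := by
      rw [hxt]
      simp only
      rw [clamp_id θu_mem, hpb]
    rw [← heq]
    exact hxta hθ.2
  have hxheq : ∀ θ ∈ Icc E.θl E.θu,
      xh θ = max (Mo.Dstar (Mo.zstar θ)) (Mo.Dstar E.θu) := by
    intro θ hθ
    rw [hxh]
    simp only
    rw [xhat_eq Mo θ, clamp_id hθ]
  have h2 : Mo.J xt ≤ Mo.J xh := by
    apply J_mono Mo hxta hxtm hxha hxhm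
    intro θ hθ
    have hproj := proj_le Mo.DstarDemand (z := Mo.zstar θ) (L := Mo.Dstar E.θu)
      (s := xt θ) (zstar_ge_PQ Mo hθ) (D_mem Mo.DstarDemand E.θu) (hxtm θ)
      (hxt_ge θ hθ)
    rw [hxheq θ hθ]
    exact hproj
  obtain ⟨θ1, hθ1, hθ1lt⟩ := cond1_theta1 Mo hcond hgap
  set K1 := (E.ql + Mo.Dstar E.θu) / 2 with hK1
  set K2 := (K1 + Mo.Dstar E.θu) / 2 with hK2
  have hgap' : E.ql < Mo.Dstar E.θu := hgap
  have hK1gt : E.ql < K1 := by simp only [hK1]; linarith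
  have hK12 : K1 < K2 := by simp only [hK2, hK1]; linarith
  have hK2lt : K2 < Mo.Dstar E.θu := by simp only [hK2, hK1]; linarith
  have hK1m : K1 ∈ Icc (0:ℝ) E.qbar := by
    constructor
    · have := (ql_mem (E := E)).1
      show (0:ℝ) ≤ K1
      linarith
    · have hDq : Mo.Dstar E.θu ≤ E.qbar := (D_mem Mo.DstarDemand E.θu).2
      show K1 ≤ E.qbar
      linarith
  have hK2m : K2 ∈ Icc (0:ℝ) E.qbar := by
    constructor
    · show (0:ℝ) ≤ K2
      have := hK1m.1
      linarith
    · have hDq : Mo.Dstar E.θu ≤ E.qbar := (D_mem Mo.DstarDemand E.θu).2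
      show K2 ≤ E.qbar
      linarith
  set c := (Mo.Pstar K1 - Mo.Pstar K2) * (Mo.Dstar E.θu - K2) with hc
  have hcpos : 0 < c := by
    apply mul_pos _ (by linarith)
    have := Mo.Pstar_anti hK1m hK2m hK12
    linarith
  have h3 : Mo.J xh < Mo.J (qs Mo) := by
    apply J_lt Mo hxha hxhm (qs_anti Mo) (qs_mem Mo) ?_ hθ1 hcpos ?_
    · -- weak pointwise
      intro θ hθ
      have hz := zstar_ge_PQ Mo hθ
      set κ := Mo.Dstar (Mo.zstar θ) with hκ
      have hqs : qs Mo θ = max κ E.ql := by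
        unfold qs Model.qBM
        rw [clamp_id hθ]
      rcases le_or_gt (Mo.Dstar E.θu) κ with hcase | hcase
      · have he1 : xh θ = κ := by rw [hxheq θ hθ, max_eq_left hcase]
        have he2 : qs Mo θ = κ := by
          rw [hqs, max_eq_left (by linarith [hgap'] : E.ql ≤ κ)]
        rw [he1, he2]
      · have he1 : xh θ = Mo.Dstar E.θu := by rw [hxheq θ hθ, max_eq_right hcase.le]
        have hqsle : qs Mo θ ≤ Mo.Dstar E.θu := by
          rw [hqs]
          exact max_le hcase.le hgap'.le
        have hκle : κ ≤ qs Mo θ := by rw [hqs]; exact le_max_left _ _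
        have := value_dec_le Mo.DstarDemand (z := Mo.zstar θ) hz
          (s1 := qs Mo θ) (s2 := Mo.Dstar E.θu)
          ((qs_mem Mo θ)) ((D_mem Mo.DstarDemand E.θu)) hκle hqsle
        rw [he1]
        exact this
    · -- strict pointwise on [θ1, θu]
      intro θ hθ
      have hθΘ : θ ∈ E.Θ := ⟨hθ1.1.trans hθ.1, hθ.2⟩
      have hz := zstar_ge_PQ Mo hθΘ
      set κ := Mo.Dstar (Mo.zstar θ) with hκ
      have hκlt : κ < K1 := by
        have hmono : Mo.qBM θ ≤ Mo.qBM θ1 := by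
          unfold Model.qBM
          exact D_antitone Mo.DstarDemand
            (zstar_mono' Mo ⟨hθ1.1, hθ1.2.le⟩ hθΘ hθ.1)
        calc κ = Mo.qBM θ := rfl
          _ ≤ Mo.qBM θ1 := hmono
          _ < K1 := hθ1lt
      have he1 : xh θ = Mo.Dstar E.θu := by
        rw [hxheq θ hθΘ, max_eq_right (by linarith : κ ≤ Mo.Dstar E.θu)]
      have hqs : qs Mo θ = max κ E.ql := by
        unfold qs Model.qBM
        rw [clamp_id hθΘ]
      have hqsle : qs Mo θ ≤ K1 := by
        rw [hqs]
        exact max_le hκlt.le hK1gt.le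
      have hκle : κ ≤ qs Mo θ := by rw [hqs]; exact le_max_left _ _
      -- g(K2) - g(D* θu) ≥ c
      have hPK1z : Mo.Pstar K1 ≤ Mo.zstar θ := by
        have hκ' : Mo.DstarDemand.D (Mo.zstar θ) ≤ K1 := le_of_lt hκlt
        exact P_le_z Mo.DstarDemand (z := Mo.zstar θ) hz hK1m (σ := K1) hκ'
      have hVd : Mo.DstarDemand.V (Mo.Dstar E.θu) - Mo.DstarDemand.V K2
          = ∫ s in K2..(Mo.Dstar E.θu), Mo.DstarDemand.P s :=
        V_diff Mo.DstarDemand hK2m (D_mem Mo.DstarDemand E.θu)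
      have hVb : (∫ s in K2..(Mo.Dstar E.θu), Mo.DstarDemand.P s)
          ≤ (Mo.Dstar E.θu - K2) * Mo.Pstar K2 :=
        int_P_le_const Mo.DstarDemand hK2lt.le hK2m (D_mem Mo.DstarDemand E.θu)
      have hgA : Mo.Vstar (Mo.Dstar E.θu) - Mo.zstar θ * Mo.Dstar E.θu + c
          ≤ Mo.Vstar K2 - Mo.zstar θ * K2 := by
        have hVd' : Mo.Vstar (Mo.Dstar E.θu) - Mo.Vstar K2
            = ∫ s in K2..(Mo.Dstar E.θu), Mo.DstarDemand.P s := hVd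
        rw [hc]
        nlinarith [hVd', hVb, hPK1z, hK2lt]
      have hgB : Mo.Vstar K2 - Mo.zstar θ * K2
          ≤ Mo.Vstar (qs Mo θ) - Mo.zstar θ * qs Mo θ := by
        have := value_dec_le Mo.DstarDemand (z := Mo.zstar θ) hz
          (s1 := qs Mo θ) (s2 := K2) (qs_mem Mo θ) hK2m hκle (by linarith)
        exact this
      rw [he1]
      linarith
  have h4 : Mo.J (qs Mo) ≤ Mo.J qOPT := hsol.2 (qs Mo) (qs_feasible Mo hcond hDl)
  have h5 : Mo.WStar qOPT (fun θ => ∫ y in θ..E.θu, qOPT y) = Mo.J qOPT :=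
    WStar_eq_J Mo hsol.1.1
  linarith

end Aux

namespace Aux

variable {E : Env}

lemma J_congr (Mo : Model E) {x1 x2 : ℝ → ℝ} (h : ∀ θ ∈ Icc E.θl E.θu, x1 θ = x2 θ) :
    Mo.J x1 = Mo.J x2 := by
  unfold Model.J
  apply intervalIntegral.integral_congr
  intro θ hθ
  rw [uIcc_of_le ab_le] at hθ
  show (Mo.Vstar (x1 θ) - Mo.zstar θ * x1 θ) * Mo.fstar θ
    = (Mo.Vstar (x2 θ) - Mo.zstar θ * x2 θ) * Mo.fstar θ
  rw [h θ hθ]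

lemma qOPT_θu {q : ℝ → ℝ} (hfeas : E.FeasibleROPT q) : q E.θu = E.ql := by
  have h := hfeas.2 E.θu θu_mem
  unfold Env.Wl at h
  rw [intervalIntegral.integral_same] at h
  by_contra hne
  have := Gstar_ub_strict (hfeas.1.2 E.θu θu_mem) (by rw [ql_eq] at hne ⊢; exact hne)
  linarith

lemma Dl_area {θ0 : ℝ} (hθ0 : θ0 ∈ E.Θ) :
    E.Vl (E.Dl θ0) - θ0 * E.Dl θ0 = E.Gstar + ∫ v in θ0..E.θu, E.Dl v := by
  have h := area E.DlDemand (w1 := θ0) (w2 := E.θu)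
    ((PQ_lt_θl E.DlDemand).trans_le hθ0.1).le hθ0.2 (θu_lt_P0 E.DlDemand).le
  rw [DlD, DlV] at h
  unfold Env.Gstar Env.ql
  linarith [h]

lemma Wl_bound {q : ℝ → ℝ} (hfeas : E.FeasibleROPT q) {θ0 : ℝ} (hθ0 : θ0 ∈ E.Θ) :
    (∫ y in θ0..E.θu, q y) ≤ ∫ y in θ0..E.θu, E.Dl y := by
  have h := hfeas.2 θ0 hθ0
  unfold Env.Wl at h
  have h2 : E.Vl (q θ0) - θ0 * q θ0 ≤ E.Vl (E.Dl θ0) - θ0 * E.Dl θ0 :=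
    value_le E.DlDemand hθ0 (hfeas.1.2 θ0 hθ0)
  have h3 := Dl_area hθ0
  linarith

lemma J_eq_ae (Mo : Model E) {x1 x2 : ℝ → ℝ} (h1 : Antitone x1)
    (m1 : ∀ θ, x1 θ ∈ Icc (0:ℝ) E.qbar) (h2 : Antitone x2)
    (m2 : ∀ θ, x2 θ ∈ Icc (0:ℝ) E.qbar)
    (hpt : ∀ θ ∈ Icc E.θl E.θu,
      Mo.Vstar (x1 θ) - Mo.zstar θ * x1 θ ≤ Mo.Vstar (x2 θ) - Mo.zstar θ * x2 θ)
    (huniq : ∀ θ ∈ Ioc E.θl E.θu,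
      Mo.Vstar (x1 θ) - Mo.zstar θ * x1 θ = Mo.Vstar (x2 θ) - Mo.zstar θ * x2 θ →
        x1 θ = x2 θ)
    (heq : Mo.J x1 = Mo.J x2) :
    volume ({θ | x1 θ ≠ x2 θ} ∩ Ioc E.θl E.θu) = 0 := by
  set G : ℝ → ℝ := fun θ => (Mo.Vstar (x2 θ) - Mo.zstar θ * x2 θ) * Mo.fstar θ
    - (Mo.Vstar (x1 θ) - Mo.zstar θ * x1 θ) * Mo.fstar θ with hG
  have hGint : Integrable G (volume.restrict (Ioc E.θl E.θu)) :=
    ((gJ_int Mo h2 m2).1).sub ((gJ_int Mo h1 m1).1)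
  have hGnn : 0 ≤ᵐ[volume.restrict (Ioc E.θl E.θu)] G := by
    apply Filter.eventually_of_mem (self_mem_ae_restrict measurableSet_Ioc)
    intro θ hθ
    have hf := (Mo.fstar_pos θ (Ioc_subset_Icc_self hθ)).le
    have hp := hpt θ (Ioc_subset_Icc_self hθ)
    simp only [hG, Pi.zero_apply]
    nlinarith
  have hG0 : (∫ θ, G θ ∂(volume.restrict (Ioc E.θl E.θu))) = 0 := by
    have hs := integral_sub ((gJ_int Mo h2 m2).1) ((gJ_int Mo h1 m1).1)
    have hJ1 : Mo.J x1 = ∫ θ, (Mo.Vstar (x1 θ) - Mo.zstar θ * x1 θ) * Mo.fstar θ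
        ∂(volume.restrict (Ioc E.θl E.θu)) := intervalIntegral.integral_of_le ab_le
    have hJ2 : Mo.J x2 = ∫ θ, (Mo.Vstar (x2 θ) - Mo.zstar θ * x2 θ) * Mo.fstar θ
        ∂(volume.restrict (Ioc E.θl E.θu)) := intervalIntegral.integral_of_le ab_le
    rw [hG]
    rw [hs]
    rw [← hJ1, ← hJ2, heq]
    ring
  have hae := (integral_eq_zero_iff_of_nonneg_ae hGnn hGint).mp hG0
  have hnull : volume.restrict (Ioc E.θl E.θu) {θ | ¬ G θ = 0} = 0 := by
    have := ae_iff.mp hae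
    simpa using this
  rw [Measure.restrict_apply' measurableSet_Ioc] at hnull
  apply measure_mono_null _ hnull
  intro θ ⟨hne, hmem⟩
  refine ⟨?_, hmem⟩
  intro hG0'
  apply hne
  apply huniq θ hmem
  have hf := Mo.fstar_pos θ (Ioc_subset_Icc_self hmem)
  have : ((Mo.Vstar (x2 θ) - Mo.zstar θ * x2 θ)
      - (Mo.Vstar (x1 θ) - Mo.zstar θ * x1 θ)) * Mo.fstar θ = 0 := by
    rw [hG] at hG0'
    simp only at hG0'
    nlinarith [hG0']
  rcases mul_eq_zero.mp this with h | h
  · linarith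
  · exact absurd h hf.ne'

lemma setint_eq_of_null {x1 x2 : ℝ → ℝ}
    (hnull : volume ({θ | x1 θ ≠ x2 θ} ∩ Ioc E.θl E.θu) = 0)
    {cc d : ℝ} (hc : E.θl ≤ cc) (hcd : cc ≤ d) (hd : d ≤ E.θu) :
    (∫ y in cc..d, x1 y) = ∫ y in cc..d, x2 y := by
  rw [intervalIntegral.integral_of_le hcd, intervalIntegral.integral_of_le hcd]
  apply integral_congr_ae
  show ∀ᵐ y ∂(volume.restrict (Ioc cc d)), x1 y = x2 y
  rw [ae_iff]
  rw [Measure.restrict_apply' measurableSet_Ioc]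
  apply measure_mono_null _ hnull
  intro θ ⟨hne, hmem⟩
  exact ⟨hne, ⟨hc.trans_lt hmem.1, hmem.2.trans hd⟩⟩

lemma d2_identity (Mo : Model E) :
    E.Vl (Mo.Dstar E.θl) - E.θl * Mo.Dstar E.θl - E.Gstar
      = (∫ x in E.θl..E.θu, E.Dl x)
        - ∫ x in E.θl..(E.Pl (Mo.Dstar E.θl)), (E.Dl x - Mo.Dstar E.θl) := by
  set y := Mo.Dstar E.θl with hy
  have hym : y ∈ Icc (0:ℝ) E.qbar := D_mem Mo.DstarDemand E.θl
  set w := E.Pl y with hw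
  have hyge : E.Dl E.θl ≤ y := D_le_D E.DlDemand Mo.DstarDemand Mo.Pstar_ge θl_mem
  have hwle : w ≤ E.θl := by
    have h1 : E.Pl y ≤ E.Pl (E.Dl E.θl) :=
      E.Pl_anti.antitoneOn (D_mem E.DlDemand E.θl) hym hyge
    have h2 : E.Pl (E.Dl E.θl) = E.θl := D_inv' E.DlDemand θl_mem
    rwa [h2] at h1
  have hwge : E.Pl E.qbar ≤ w := E.Pl_anti.antitoneOn hym qbar_mem hym.2
  have hDlw : E.Dl w = y := D_of_P E.DlDemand hym
  have harea : E.Vl y - w * y = E.Gstar + ∫ v in w..E.θu, E.Dl v := by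
    have h := area E.DlDemand (w1 := w) (w2 := E.θu) hwge
      (hwle.trans E.θlu.le) (θu_lt_P0 E.DlDemand).le
    rw [DlD, DlV] at h
    rw [hDlw] at h
    unfold Env.Gstar Env.ql
    linarith [h]
  have hDl_int : ∀ u v : ℝ, IntervalIntegrable E.Dl volume u v :=
    fun u v => ((D_antitone E.DlDemand).antitoneOn _).intervalIntegrable
  have hsplit : (∫ v in w..E.θu, E.Dl v)
      = (∫ v in w..E.θl, E.Dl v) + ∫ v in E.θl..E.θu, E.Dl v := by
    rw [intervalIntegral.integral_add_adjacent_intervals (hDl_int w E.θl)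
      (hDl_int E.θl E.θu)]
  have hsub : (∫ x in E.θl..w, (E.Dl x - y))
      = (∫ x in E.θl..w, E.Dl x) - (w - E.θl) * y := by
    rw [intervalIntegral.integral_sub (hDl_int E.θl w) intervalIntegrable_const]
    rw [intervalIntegral.integral_const, smul_eq_mul]
  have hsymm : (∫ x in E.θl..w, E.Dl x) = -∫ x in w..E.θl, E.Dl x :=
    intervalIntegral.integral_symm _ _
  rw [hsub, hsymm]
  linarith [harea, hsplit]

/-- Part 2: price strictly dominates quantity. -/
lemma part2_main (Mo : Model E) (hD : Mo.Dstar E.θu = E.Dl E.θu)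
    (hdisj : (∃ θ ∈ E.Θ,
        (∫ x in θ..E.θu, E.Dl x) <
          ∫ x in θ..E.θu, max (Mo.Dstar (x + Mo.Fstar x / Mo.fstar x)) (E.Dl E.θu)) ∨
      ((∫ x in E.θl..E.θu, E.Dl x) -
          (∫ x in E.θl..(E.Pl (Mo.Dstar E.θl)), (E.Dl x - Mo.Dstar E.θl)) <
        ∫ x in E.θl..E.θu, max (Mo.Dstar (x + Mo.Fstar x / Mo.fstar x)) (E.Dl E.θu)))
    (qOPT : ℝ → ℝ) (hsol : Mo.SolvesROPT qOPT)
    (p : ℝ → ℝ) (t : ℝ → Demand E → ℝ) (hRO : Mo.RobustlyOptimalPR p t) :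
    Mo.WStar qOPT (fun θ => ∫ y in θ..E.θu, qOPT y) < Mo.WtStar p t := by
  have hfeas := hsol.1
  set qt : ℝ → ℝ := fun θ => qOPT (clamp E θ) with hqt
  have hqta : Antitone qt := qt_anti hfeas.1.1
  have hqtm : ∀ θ, qt θ ∈ Icc (0:ℝ) E.qbar := fun θ => hfeas.1.2 _ (clamp_mem θ)
  set xh : ℝ → ℝ := fun θ => Mo.Dstar (phat Mo θ) with hxh
  have hxha : Antitone xh := xhat_anti Mo Mo.DstarDemand
  have hxhm : ∀ θ, xh θ ∈ Icc (0:ℝ) E.qbar := fun θ => D_mem Mo.DstarDemand _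
  have hql : E.ql = Mo.Dstar E.θu := hD.symm
  have hqθu : qOPT E.θu = E.ql := qOPT_θu hfeas
  have hqt_ge : ∀ θ, E.ql ≤ qt θ := by
    intro θ
    rw [hqt]
    simp only
    rw [← hqθu]
    exact hfeas.1.1 (clamp_mem θ) θu_mem (clamp_mem θ).2
  have hxheqm : ∀ θ ∈ Icc E.θl E.θu, xh θ = max (Mo.Dstar (Mo.zstar θ)) E.ql := by
    intro θ hθ
    rw [hxh]
    simp only
    rw [xhat_eq Mo θ, clamp_id hθ, ← hql]
  have hqeqt : ∀ θ ∈ Icc E.θl E.θu, qOPT θ = qt θ := by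
    intro θ hθ
    rw [hqt]
    simp only
    rw [clamp_id hθ]
  have hweak : ∀ θ ∈ Icc E.θl E.θu,
      Mo.Vstar (qt θ) - Mo.zstar θ * qt θ ≤ Mo.Vstar (xh θ) - Mo.zstar θ * xh θ := by
    intro θ hθ
    have hproj := proj_le Mo.DstarDemand (z := Mo.zstar θ) (L := E.ql) (s := qt θ)
      (zstar_ge_PQ Mo hθ) ql_mem (hqtm θ) (hqt_ge θ)
    rw [hxheqm θ hθ]
    exact hproj
  have hJle : Mo.J qt ≤ Mo.J xh := J_mono Mo hqta hqtm hxha hxhm hweak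
  have hJq : Mo.J qOPT = Mo.J qt := J_congr Mo hqeqt
  -- the statement's integrand equals xh on Θ
  have hint_eq : ∀ {cc : ℝ}, cc ∈ E.Θ →
      (∫ x in cc..E.θu, max (Mo.Dstar (x + Mo.Fstar x / Mo.fstar x)) (E.Dl E.θu))
        = ∫ x in cc..E.θu, xh x := by
    intro cc hcc
    apply intervalIntegral.integral_congr
    intro x hx
    rw [uIcc_of_le hcc.2] at hx
    have hxΘ : x ∈ E.Θ := ⟨hcc.1.trans hx.1, hx.2⟩
    show max (Mo.Dstar (x + Mo.Fstar x / Mo.fstar x)) (E.Dl E.θu) = xh x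
    rw [hxheqm x hxΘ]
    rfl
  have hstrict : Mo.J qt < Mo.J xh := by
    rcases hJle.lt_or_eq with h | heq
    · exact h
    exfalso
    have huniq : ∀ θ ∈ Ioc E.θl E.θu,
        Mo.Vstar (qt θ) - Mo.zstar θ * qt θ = Mo.Vstar (xh θ) - Mo.zstar θ * xh θ →
          qt θ = xh θ := by
      intro θ hθ hg
      by_contra hne
      have hθI : θ ∈ Icc E.θl E.θu := Ioc_subset_Icc_self hθ
      have hne' : qt θ ≠ max (Mo.DstarDemand.D (Mo.zstar θ)) E.ql := by
        rw [show max (Mo.DstarDemand.D (Mo.zstar θ)) E.ql = xh θ from (hxheqm θ hθI).symm]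
        exact hne
      have hlt := proj_lt Mo.DstarDemand (z := Mo.zstar θ) (L := E.ql) (s := qt θ)
        (zstar_ge_PQ Mo hθI) ql_mem (hqtm θ) (hqt_ge θ) hne'
      rw [show max (Mo.DstarDemand.D (Mo.zstar θ)) E.ql = xh θ from (hxheqm θ hθI).symm]
        at hlt
      have hlt' : Mo.Vstar (qt θ) - Mo.zstar θ * qt θ
          < Mo.Vstar (xh θ) - Mo.zstar θ * xh θ := hlt
      linarith
    have hnull := J_eq_ae Mo hqta hqtm hxha hxhm hweak huniq heq
    rcases hdisj with ⟨θ0, hθ0, hlt⟩ | hlt2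
    · have hfb := Wl_bound hfeas hθ0
      have he1 : (∫ y in θ0..E.θu, qOPT y) = ∫ y in θ0..E.θu, qt y := by
        apply intervalIntegral.integral_congr
        intro y hy
        rw [uIcc_of_le hθ0.2] at hy
        exact hqeqt y ⟨hθ0.1.trans hy.1, hy.2⟩
      have he2 : (∫ y in θ0..E.θu, qt y) = ∫ y in θ0..E.θu, xh y :=
        setint_eq_of_null hnull hθ0.1 hθ0.2 (le_refl _)
      have he3 := hint_eq hθ0
      linarith
    · set σ := qOPT E.θl with hσdef
      have hσm : σ ∈ Icc (0:ℝ) E.qbar := hfeas.1.2 E.θl θl_mem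
      -- σ ≥ Dstar (zstar η) for all η ∈ Ioc θl θu
      have hσ_ge : ∀ η ∈ Ioc E.θl E.θu, Mo.Dstar (Mo.zstar η) ≤ σ := by
        intro η hη
        have hηI : η ∈ Icc E.θl E.θu := Ioc_subset_Icc_self hη
        have h1 : (η - E.θl) * xh η ≤ ∫ y in E.θl..η, xh y :=
          const_le_int_anti (hxha.antitoneOn (Icc E.θl E.θu)) (le_refl _) hη.1.le hη.2
        have h2 : (∫ y in E.θl..η, xh y) = ∫ y in E.θl..η, qt y :=
          (setint_eq_of_null hnull (le_refl _) hη.1.le hη.2).symm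
        have h3 : (∫ y in E.θl..η, qt y) ≤ (η - E.θl) * qt E.θl :=
          int_le_const_anti (hqta.antitoneOn (Icc E.θl E.θu)) (le_refl _) hη.1.le hη.2
        have h4 : qt E.θl = σ := by
          rw [hqt]
          simp only
          rw [clamp_id θl_mem]
        have hηpos : 0 < η - E.θl := by linarith [hη.1]
        have hxhσ : xh η ≤ σ := by nlinarith [h1, h2, h3, h4 ▸ h3]
        have hκ : Mo.Dstar (Mo.zstar η) ≤ xh η := by
          rw [hxheqm η hηI]
          exact le_max_left _ _
        linarith
      -- P* σ ≤ θl
      have hPσ : Mo.Pstar σ ≤ E.θl := by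
        by_contra hgt
        push_neg at hgt
        have hP0 : E.θl < Mo.Pstar 0 := E.θlu.trans Mo.Pstar0
        set ε := min (Mo.Pstar σ - E.θl) (Mo.Pstar 0 - E.θl) with hε
        have hε0 : 0 < ε := lt_min (by linarith) (by linarith)
        have hcw := Mo.zstar_cont E.θl θl_mem
        rw [Metric.continuousWithinAt_iff] at hcw
        obtain ⟨δ, hδ0, hδ⟩ := hcw ε hε0
        set η := min (E.θl + δ/2) E.θu with hηdef
        have hη : η ∈ Ioc E.θl E.θu := by
          constructor
          · apply lt_min (by linarith) E.θlu
          · exact min_le_right _ _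
        have hηΘ : η ∈ E.Θ := ⟨hη.1.le, hη.2⟩
        have hdist : dist η E.θl < δ := by
          rw [Real.dist_eq, abs_of_nonneg (by linarith [hη.1])]
          have : η ≤ E.θl + δ/2 := min_le_left _ _
          linarith
        have habs := hδ hηΘ hdist
        rw [Real.dist_eq] at habs
        have hz1 : η + Mo.Fstar η / Mo.fstar η = Mo.zstar η := rfl
        have hz2 : E.θl + Mo.Fstar E.θl / Mo.fstar E.θl = Mo.zstar E.θl := rfl
        rw [hz1, hz2, zstar_θl Mo] at habs
        have h3 := abs_lt.mp habs
        have hzlt : Mo.zstar η < E.θl + ε := by linarith [h3.2]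
        have hin : Mo.zstar η ≤ Mo.Pstar 0 := by
          have : ε ≤ Mo.Pstar 0 - E.θl := min_le_right _ _
          linarith
        have hinv : Mo.Pstar (Mo.Dstar (Mo.zstar η)) = Mo.zstar η :=
          D_inv'' Mo.DstarDemand (zstar_ge_PQ Mo hηΘ) hin
        have hPle : Mo.Pstar σ ≤ Mo.Pstar (Mo.Dstar (Mo.zstar η)) :=
          Mo.Pstar_anti.antitoneOn (D_mem Mo.DstarDemand _) hσm (hσ_ge η hη)
        have : ε ≤ Mo.Pstar σ - E.θl := min_le_left _ _
        rw [hinv] at hPle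
        linarith
      -- σ ≥ Dstar θl
      have hσge : Mo.Dstar E.θl ≤ σ := by
        by_contra hcon
        push_neg at hcon
        have h1 : Mo.Pstar (Mo.Dstar E.θl) < Mo.Pstar σ :=
          Mo.Pstar_anti hσm (D_mem Mo.DstarDemand E.θl) hcon
        have h2 : Mo.Pstar (Mo.Dstar E.θl) = E.θl := D_inv' Mo.DstarDemand θl_mem
        linarith [h2 ▸ h1]
      -- value comparison
      have hDlθl : E.Dl E.θl ≤ Mo.Dstar E.θl :=
        D_le_D E.DlDemand Mo.DstarDemand Mo.Pstar_ge θl_mem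
      have hv : E.Vl σ - E.θl * σ ≤ E.Vl (Mo.Dstar E.θl) - E.θl * Mo.Dstar E.θl := by
        have := value_mono_right E.DlDemand θl_mem (y1 := Mo.Dstar E.θl) (y2 := σ)
          (D_mem Mo.DstarDemand E.θl) hσm hσge hDlθl
        rw [DlV] at this
        exact this
      -- feasibility at θl
      have hWl := hfeas.2 E.θl θl_mem
      unfold Env.Wl at hWl
      have he1 : (∫ y in E.θl..E.θu, qOPT y) = ∫ y in E.θl..E.θu, qt y := by
        apply intervalIntegral.integral_congr
        intro y hy
        rw [uIcc_of_le ab_le] at hy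
        exact hqeqt y hy
      have he2 : (∫ y in E.θl..E.θu, qt y) = ∫ y in E.θl..E.θu, xh y :=
        setint_eq_of_null hnull (le_refl _) ab_le (le_refl _)
      have he3 := hint_eq θl_mem
      have hident := d2_identity Mo
      rw [← hσdef] at hWl
      linarith
  have hbm := WtStar_bm Mo
  have hle2 : Mo.WtStar (phat Mo) (that Mo) ≤ Mo.WtStar p t :=
    hRO.2 (phat Mo) (that Mo) (bm_shortlist Mo)
  have h5 : Mo.WStar qOPT (fun θ => ∫ y in θ..E.θu, qOPT y) = Mo.J qOPT :=
    WStar_eq_J Mo hfeas.1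
  have hbm' : Mo.WtStar (phat Mo) (that Mo) = Mo.J xh := hbm
  linarith

end Aux
/-- Corollary (quantity vs price regulation in terms of primitives): (1) if downward
demand uncertainty vanishes at `θl`, is present at `θu`, and the hazard-rate condition
holds, quantity regulation strictly dominates; (2) if downward uncertainty vanishes at
`θu` and one of the reverse conditions holds, price regulation strictly dominates. -/
theorem quantity_vs_price_primitives (E : Env) (Mo : Model E) :
    ((Mo.Dstar E.θl = E.Dl E.θl → E.Dl E.θu < Mo.Dstar E.θu →
      (∀ θ ∈ E.Θ,
        (∫ x in θ..E.θu, max (Mo.Dstar (x + Mo.Fstar x / Mo.fstar x)) (E.Dl E.θu)) ≤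
          ∫ x in θ..E.θu, E.Dl x) →
      ∀ qOPT : ℝ → ℝ, Mo.SolvesROPT qOPT →
        ∀ (p : ℝ → ℝ) (t : ℝ → Demand E → ℝ), Mo.RobustlyOptimalPR p t →
          Mo.WtStar p t < Mo.WStar qOPT (fun θ => ∫ y in θ..E.θu, qOPT y)) ∧
    (Mo.Dstar E.θu = E.Dl E.θu →
      ((∃ θ ∈ E.Θ,
          (∫ x in θ..E.θu, E.Dl x) <
            ∫ x in θ..E.θu, max (Mo.Dstar (x + Mo.Fstar x / Mo.fstar x)) (E.Dl E.θu)) ∨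
        ((∫ x in E.θl..E.θu, E.Dl x) -
            (∫ x in E.θl..(E.Pl (Mo.Dstar E.θl)), (E.Dl x - Mo.Dstar E.θl)) <
          ∫ x in E.θl..E.θu, max (Mo.Dstar (x + Mo.Fstar x / Mo.fstar x)) (E.Dl E.θu))) →
      ∀ qOPT : ℝ → ℝ, Mo.SolvesROPT qOPT →
        ∀ (p : ℝ → ℝ) (t : ℝ → Demand E → ℝ), Mo.RobustlyOptimalPR p t →
          Mo.WStar qOPT (fun θ => ∫ y in θ..E.θu, qOPT y) < Mo.WtStar p t)) := by
  constructor
  · intro hDl hgap hcond qOPT hsol p t hRO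
    exact Aux.part1_main Mo hDl hgap hcond qOPT hsol p t hRO
  · intro hD hdisj qOPT hsol p t hRO
    exact Aux.part2_main Mo hD hdisj qOPT hsol p t hRO
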